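/- arXiv:1805.01390 — 4 statements merged into one kernel-verified Lean document; each statement's English description precedes it below -/
import Mathlib

section
/- For any 2-covector ω on an m-dimensional real inner product space, ‖ω‖_C ≤ ‖ω‖₂ ≤ √⌊m/2⌋ · ‖ω‖_C, and both inequalities are sharp: equality holds on the left for simple (decomposable) 2-covectors, and for m = 2n the standard symplectic form achieves equality on the right. -/
/-- The Euclidean norm of a 2-covector (alternating bilinear form) on an inner product
space with respect to an orthonormal basis (each unordered pair of indices is counted
twice in the double sum, whence the factor `1/2`). -/
noncomputable def eucNormBil {V : Type*} [NormedAddCommGroup V] [InnerProductSpace ℝ V]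
    {m : ℕ} (b : OrthonormalBasis (Fin m) ℝ V) (ω : V →ₗ[ℝ] V →ₗ[ℝ] ℝ) : ℝ :=
  Real.sqrt ((1 / 2) * ∑ i : Fin m, ∑ j : Fin m, (ω (b i) (b j)) ^ 2)

/-- The comass norm of a 2-covector. -/
noncomputable def comassBil {V : Type*} [NormedAddCommGroup V] [InnerProductSpace ℝ V]
    (ω : V →ₗ[ℝ] V →ₗ[ℝ] ℝ) : ℝ :=
  sSup {r : ℝ | ∃ u v : V, ‖u‖ = 1 ∧ ‖v‖ = 1 ∧ ω u v = r}

/-!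
Write `F = ∑ᵢⱼ ω(bᵢ, bⱼ)²` (`entrySqSum b ω`), so that `‖ω‖₂ = √(F / 2)`. Bessel's
inequality, applied to the rows `ω (bᵢ)` and then to the columns, shows that `F` dominates the
same sum over any orthonormal family and hence does not depend on the orthonormal basis. For an
orthonormal pair `(u, w)` this gives `2 ω(u, w)² ≤ F`, whence `‖ω‖_C ≤ ‖ω‖₂`.

Conversely, the row `∑ⱼ ω(x, bⱼ)²` of a unit vector `x` is the squared norm of the functional
`ω x`, so it is at most `‖ω‖_C²` and `F ≤ m ‖ω‖_C²`. In odd dimension a skew form has a unit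
vector `z` in its kernel; computing `F` in an orthonormal basis through `z` gives
`F ≤ (m - 1) ‖ω‖_C²`.

For `ω = α ∧ β` the Riesz vectors `a, c` of `α, β` may be taken orthogonal, and then
`‖ω‖₂ = ‖a‖ ‖c‖ = ω(a / ‖a‖, c / ‖c‖)`. For `m = 2n`, the form `⟪J x, y⟫` of an orthogonal
complex structure `J` (multiplication by `i` on `ℂⁿ`) has comass `1` and `F = m`.
-/

open Finset Module
open scoped RealInnerProductSpace

lemma sum_sum_mul_sub_mul_sq {ι : Type*} [Fintype ι] (f g : ι → ℝ) :
    ∑ i, ∑ j, (f i * g j - f j * g i) ^ 2 =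
      2 * ((∑ i, f i ^ 2) * (∑ i, g i ^ 2) - (∑ i, f i * g i) ^ 2) := by
  have hrow : ∀ i, ∑ j, (f i * g j - f j * g i) ^ 2 =
      f i ^ 2 * ∑ j, g j ^ 2 + g i ^ 2 * ∑ j, f j ^ 2 - 2 * (f i * g i) * ∑ j, f j * g j := by
    intro i
    rw [mul_sum, mul_sum, mul_sum, ← sum_add_distrib, ← sum_sub_distrib]
    exact sum_congr rfl fun j _ => by ring
  simp only [hrow, sum_sub_distrib, sum_add_distrib, ← sum_mul, ← mul_sum]
  ring

lemma EuclideanSpace.real_inner_I_smul {ι : Type*} [Fintype ι] (x y : EuclideanSpace ℂ ι) :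
    ⟪Complex.I • x, y⟫ = -⟪Complex.I • y, x⟫ := by
  simp only [PiLp.inner_apply, PiLp.smul_apply, smul_eq_mul, Complex.inner, ← sum_neg_distrib]
  refine sum_congr rfl fun i _ => ?_
  simp only [map_mul, Complex.conj_I, Complex.mul_re, Complex.mul_im, Complex.conj_re,
    Complex.conj_im, Complex.neg_re, Complex.neg_im, Complex.I_re, Complex.I_im]
  ring

section

variable {V : Type*} [NormedAddCommGroup V] [InnerProductSpace ℝ V] {ι κ : Type*} [Fintype ι]

noncomputable def entrySqSum (b : OrthonormalBasis ι ℝ V) (ω : V →ₗ[ℝ] V →ₗ[ℝ] ℝ) : ℝ :=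
  ∑ i, ∑ j, ω (b i) (b j) ^ 2

variable {ω : V →ₗ[ℝ] V →ₗ[ℝ] ℝ}

lemma eucNormBil_eq_sqrt_entrySqSum {m : ℕ} (b : OrthonormalBasis (Fin m) ℝ V) :
    eucNormBil b ω = √(entrySqSum b ω / 2) := by
  rw [eucNormBil, entrySqSum, one_div_mul_eq_div]

lemma real_inner_inv_norm_smul_self (r : V) : ⟪r, ‖r‖⁻¹ • r⟫ = ‖r‖ := by
  rcases eq_or_ne r 0 with rfl | hr
  · simp
  rw [real_inner_smul_right, real_inner_self_eq_norm_sq]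
  field_simp [norm_ne_zero_iff.mpr hr]

lemma OrthonormalBasis.exists_inner_eq_apply (b : OrthonormalBasis ι ℝ V) (φ : V →ₗ[ℝ] ℝ) :
    ∃ r : V, (∀ x, ⟪r, x⟫ = φ x) ∧ ‖r‖ ^ 2 = ∑ i, φ (b i) ^ 2 := by
  have hr : ∀ x, ⟪∑ i, φ (b i) • b i, x⟫ = φ x := fun x => by
    conv_rhs => rw [← b.sum_repr' x]
    rw [sum_inner, map_sum]
    exact sum_congr rfl fun i _ => by rw [real_inner_smul_left, map_smul, smul_eq_mul, mul_comm]
  refine ⟨_, hr, ?_⟩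
  simp_rw [← b.sum_sq_inner_left, hr]

lemma OrthonormalBasis.sum_sq_apply_le (b : OrthonormalBasis ι ℝ V) (φ : V →ₗ[ℝ] ℝ)
    {e : κ → V} (he : Orthonormal ℝ e) (s : Finset κ) :
    ∑ k ∈ s, φ (e k) ^ 2 ≤ ∑ i, φ (b i) ^ 2 := by
  obtain ⟨r, hr, hnorm⟩ := b.exists_inner_eq_apply φ
  rw [← hnorm]
  simpa [← hr, real_inner_comm] using he.sum_inner_products_le r (s := s)

lemma OrthonormalBasis.sum_sq_apply_le_sq (b : OrthonormalBasis ι ℝ V) {φ : V →ₗ[ℝ] ℝ}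
    {C : ℝ} (hφ : ∀ y : V, ‖y‖ = 1 → φ y ≤ C) : ∑ i, φ (b i) ^ 2 ≤ C ^ 2 := by
  obtain ⟨r, hr, hnorm⟩ := b.exists_inner_eq_apply φ
  rw [← hnorm]
  rcases eq_or_ne r 0 with rfl | hr0
  · simpa using sq_nonneg C
  have hrC : ‖r‖ ≤ C :=
    calc ‖r‖ = φ (‖r‖⁻¹ • r) := by rw [← hr, real_inner_inv_norm_smul_self]
      _ ≤ C := hφ _ (norm_smul_inv_norm hr0)
  exact pow_le_pow_left₀ (norm_nonneg r) hrC 2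

lemma sum_sum_sq_le_entrySqSum (b : OrthonormalBasis ι ℝ V) {e : κ → V} (he : Orthonormal ℝ e)
    (s : Finset κ) : ∑ k ∈ s, ∑ l ∈ s, ω (e k) (e l) ^ 2 ≤ entrySqSum b ω :=
  calc ∑ k ∈ s, ∑ l ∈ s, ω (e k) (e l) ^ 2
      ≤ ∑ k ∈ s, ∑ j, ω (e k) (b j) ^ 2 :=
        sum_le_sum fun k _ => b.sum_sq_apply_le (ω (e k)) he s
    _ = ∑ j, ∑ k ∈ s, ω.flip (b j) (e k) ^ 2 := sum_comm
    _ ≤ ∑ j, ∑ i, ω.flip (b j) (b i) ^ 2 :=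
        sum_le_sum fun j _ => b.sum_sq_apply_le (ω.flip (b j)) he s
    _ = entrySqSum b ω := sum_comm

lemma entrySqSum_eq [Fintype κ] (b : OrthonormalBasis ι ℝ V) (c : OrthonormalBasis κ ℝ V) :
    entrySqSum b ω = entrySqSum c ω :=
  le_antisymm (sum_sum_sq_le_entrySqSum c b.orthonormal univ)
    (sum_sum_sq_le_entrySqSum b c.orthonormal univ)

lemma two_mul_sq_apply_le_entrySqSum (b : OrthonormalBasis ι ℝ V)
    (hω : ∀ x y, ω x y = -ω y x) {u w : V} (hu : ‖u‖ = 1) (hw : ‖w‖ = 1) (huw : ⟪u, w⟫ = 0) :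
    2 * ω u w ^ 2 ≤ entrySqSum b ω := by
  have hpair : Orthonormal ℝ ![u, w] := by
    rw [orthonormal_iff_ite]
    simp [Fin.forall_fin_two, hu, hw, huw, real_inner_comm u w]
  have h := sum_sum_sq_le_entrySqSum b hpair univ (ω := ω)
  simp only [Fin.sum_univ_two, Matrix.cons_val_zero, Matrix.cons_val_one] at h
  rw [hω w u] at h
  nlinarith [hω u u, hω w w]

lemma apply_le_eucNormBil {m : ℕ} (b : OrthonormalBasis (Fin m) ℝ V)
    (hω : ∀ x y, ω x y = -ω y x) {u v : V} (hu : ‖u‖ = 1) (hv : ‖v‖ = 1) :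
    ω u v ≤ eucNormBil b ω := by
  obtain ⟨r, hr, -⟩ := b.exists_inner_eq_apply (ω u)
  have hvr : ω u v ≤ ‖r‖ := by simpa [hr, hv] using real_inner_le_norm r v
  refine hvr.trans ?_
  rcases eq_or_ne r 0 with rfl | hr0
  · rw [norm_zero]
    exact Real.sqrt_nonneg _
  -- the bound `‖r‖` is attained at the unit vector `‖r‖⁻¹ • r`, which is orthogonal to `u`
  have huw : ⟪u, ‖r‖⁻¹ • r⟫ = 0 := by
    rw [real_inner_smul_right, real_inner_comm, hr, (by linarith [hω u u] : ω u u = 0), mul_zero]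
  have hpair :=
    two_mul_sq_apply_le_entrySqSum (w := ‖r‖⁻¹ • r) b hω hu (norm_smul_inv_norm hr0) huw
  rw [← hr, real_inner_inv_norm_smul_self] at hpair
  rw [eucNormBil_eq_sqrt_entrySqSum]
  exact Real.le_sqrt_of_sq_le (by linarith)

lemma comassBil_nonneg (hω : ∀ x, ω x x = 0) : 0 ≤ comassBil ω := by
  rcases Set.eq_empty_or_nonempty {r : ℝ | ∃ u v : V, ‖u‖ = 1 ∧ ‖v‖ = 1 ∧ ω u v = r} with
    h | ⟨_, u, -, hu, -, -⟩
  · rw [comassBil, h, Real.sSup_empty]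
  · exact Real.sSup_nonneg' ⟨0, ⟨u, u, hu, hu, hω u⟩, le_rfl⟩

lemma comassBil_le {C : ℝ} (hC : 0 ≤ C) (h : ∀ u v : V, ‖u‖ = 1 → ‖v‖ = 1 → ω u v ≤ C) :
    comassBil ω ≤ C :=
  Real.sSup_le (by rintro _ ⟨u, v, hu, hv, rfl⟩; exact h u v hu hv) hC

lemma le_comassBil [FiniteDimensional ℝ V] (hω : ∀ x y, ω x y = -ω y x) {u v : V}
    (hu : ‖u‖ = 1) (hv : ‖v‖ = 1) : ω u v ≤ comassBil ω :=
  le_csSup ⟨eucNormBil (stdOrthonormalBasis ℝ V) ω,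
    by rintro _ ⟨u, v, hu, hv, rfl⟩; exact apply_le_eucNormBil _ hω hu hv⟩ ⟨u, v, hu, hv, rfl⟩

lemma comassBil_le_eucNormBil {m : ℕ} (b : OrthonormalBasis (Fin m) ℝ V)
    (hω : ∀ x y, ω x y = -ω y x) : comassBil ω ≤ eucNormBil b ω :=
  comassBil_le (Real.sqrt_nonneg _) fun _ _ hu hv => apply_le_eucNormBil b hω hu hv

lemma entrySqSum_le_card_mul_sq (c : OrthonormalBasis ι ℝ V) {s : Finset ι}
    (hs : ∀ i ∉ s, ω (c i) = 0) {C : ℝ} (hC : ∀ u v : V, ‖u‖ = 1 → ‖v‖ = 1 → ω u v ≤ C) :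
    entrySqSum c ω ≤ #s * C ^ 2 :=
  calc entrySqSum c ω = ∑ i ∈ s, ∑ j, ω (c i) (c j) ^ 2 :=
        (sum_subset (subset_univ s) fun i _ hi => by simp [hs i hi]).symm
    _ ≤ ∑ _i ∈ s, C ^ 2 :=
        sum_le_sum fun i _ => c.sum_sq_apply_le_sq fun y hy => hC _ y (c.orthonormal.1 i) hy
    _ = #s * C ^ 2 := by rw [sum_const, nsmul_eq_mul]

lemma exists_norm_eq_one_apply_eq_zero_of_odd (b : OrthonormalBasis ι ℝ V)
    (hodd : Odd (Fintype.card ι)) (hω : ∀ x y, ω x y = -ω y x) :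
    ∃ z : V, ‖z‖ = 1 ∧ ω z = 0 := by
  classical
  set M := LinearMap.toMatrix₂ b.toBasis b.toBasis ω
  have hM : M.transpose = -M := by
    ext i j
    simp [M, LinearMap.toMatrix₂_apply, hω (b j) (b i)]
  have hdet : M.det = 0 := by
    have h := congrArg Matrix.det hM
    rw [Matrix.det_transpose, Matrix.det_neg, hodd.neg_one_pow] at h
    linarith
  obtain ⟨p, hp, hpM⟩ := Matrix.exists_vecMul_eq_zero_iff.mpr hdet
  set z := b.toBasis.equivFun.symm p
  have hz : z ≠ 0 := b.toBasis.equivFun.symm.map_ne_zero_iff.mpr hp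
  have hωz : ω z = 0 := by
    refine b.toBasis.ext fun j => ?_
    simpa [z, Basis.equivFun_symm_apply, Matrix.vecMul, dotProduct, M,
      LinearMap.toMatrix₂_apply] using congrFun hpM j
  exact ⟨‖z‖⁻¹ • z, norm_smul_inv_norm hz, by rw [map_smul, hωz, smul_zero]⟩

lemma entrySqSum_le_two_mul_div_two_mul_sq_comassBil [FiniteDimensional ℝ V] {m : ℕ}
    (hm : finrank ℝ V = m) (b : OrthonormalBasis (Fin m) ℝ V) (hω : ∀ x y, ω x y = -ω y x) :
    entrySqSum b ω ≤ (2 * (m / 2) : ℕ) * comassBil ω ^ 2 := by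
  have hC : ∀ u v : V, ‖u‖ = 1 → ‖v‖ = 1 → ω u v ≤ comassBil ω :=
    fun _ _ hu hv => le_comassBil hω hu hv
  rcases Nat.even_or_odd m with heven | hodd
  · rw [Nat.two_mul_div_two_of_even heven]
    simpa using entrySqSum_le_card_mul_sq b (s := univ) (by simp) hC
  obtain ⟨z, hz, hωz⟩ := exists_norm_eq_one_apply_eq_zero_of_odd b (by simpa using hodd) hω
  let i₀ : Fin m := ⟨0, hodd.pos⟩
  have hz' : Orthonormal ℝ (({i₀} : Set (Fin m)).domRestrict fun _ => z) :=
    orthonormal_subsingleton_iff.mpr fun _ => hz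
  obtain ⟨c, hc⟩ := hz'.exists_orthonormalBasis_extension_of_card_eq (by rw [hm, Fintype.card_fin])
  have h := entrySqSum_le_card_mul_sq c (s := univ.erase i₀)
    (fun i hi => by rw [show i = i₀ by simpa using hi, hc i₀ rfl, hωz]) hC
  rw [Nat.two_mul_odd_div_two (Nat.odd_iff.mp hodd), entrySqSum_eq b c]
  simpa using h

lemma eucNormBil_le_sqrt_mul_comassBil [FiniteDimensional ℝ V] {m : ℕ} (hm : finrank ℝ V = m)
    (b : OrthonormalBasis (Fin m) ℝ V) (hω : ∀ x y, ω x y = -ω y x) :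
    eucNormBil b ω ≤ √(m / 2 : ℕ) * comassBil ω := by
  have hC := comassBil_nonneg fun x => by linarith [hω x x]
  rw [eucNormBil_eq_sqrt_entrySqSum, ← Real.sqrt_sq hC, ← Real.sqrt_mul (Nat.cast_nonneg _)]
  apply Real.sqrt_le_sqrt
  have h := entrySqSum_le_two_mul_div_two_mul_sq_comassBil hm b hω
  push_cast at h
  linarith

lemma entrySqSum_of_wedge (b : OrthonormalBasis ι ℝ V) {a c : V}
    (hω : ∀ x y, ω x y = ⟪a, x⟫ * ⟪c, y⟫ - ⟪a, y⟫ * ⟪c, x⟫) :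
    entrySqSum b ω = 2 * (‖a‖ ^ 2 * ‖c‖ ^ 2 - ⟪a, c⟫ ^ 2) := by
  simp only [entrySqSum, hω, sum_sum_mul_sub_mul_sq, b.sum_sq_inner_left, ← real_inner_comm c,
    b.sum_sq_inner_right, b.sum_inner_mul_inner]

-- Gram–Schmidt: `α ∧ β = α ∧ (β - t α)`.
lemma exists_inner_eq_zero_wedge_eq (a c : V) : ∃ c' : V, ⟪a, c'⟫ = 0 ∧
    ∀ x y, ⟪a, x⟫ * ⟪c, y⟫ - ⟪a, y⟫ * ⟪c, x⟫ = ⟪a, x⟫ * ⟪c', y⟫ - ⟪a, y⟫ * ⟪c', x⟫ := by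
  rcases eq_or_ne a 0 with rfl | ha
  · exact ⟨0, by simp, by simp⟩
  refine ⟨c - (⟪a, c⟫ / ‖a‖ ^ 2) • a, ?_, fun x y => ?_⟩
  · rw [inner_sub_right, real_inner_smul_right, real_inner_self_eq_norm_sq]
    field_simp [norm_ne_zero_iff.mpr ha]
    ring
  · simp only [inner_sub_left, real_inner_smul_left]
    ring

lemma eucNormBil_le_comassBil_of_wedge [FiniteDimensional ℝ V] {m : ℕ}
    (b : OrthonormalBasis (Fin m) ℝ V) {a c : V} (hac : ⟪a, c⟫ = 0)
    (hω : ∀ x y, ω x y = ⟪a, x⟫ * ⟪c, y⟫ - ⟪a, y⟫ * ⟪c, x⟫) :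
    eucNormBil b ω ≤ comassBil ω := by
  have hskew : ∀ x y, ω x y = -ω y x := fun x y => by rw [hω, hω]; ring
  have heuc : eucNormBil b ω = ‖a‖ * ‖c‖ := by
    rw [eucNormBil_eq_sqrt_entrySqSum, entrySqSum_of_wedge b hω, hac, ← mul_pow]
    simp [Real.sqrt_sq (by positivity : 0 ≤ ‖a‖ * ‖c‖)]
  rw [heuc]
  rcases eq_or_ne a 0 with rfl | ha
  · simpa using comassBil_nonneg fun x => by linarith [hskew x x]
  rcases eq_or_ne c 0 with rfl | hc
  · simpa using comassBil_nonneg fun x => by linarith [hskew x x]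
  calc ‖a‖ * ‖c‖ = ω (‖a‖⁻¹ • a) (‖c‖⁻¹ • c) := by
        rw [hω, real_inner_inv_norm_smul_self, real_inner_inv_norm_smul_self,
          real_inner_smul_right, hac, mul_zero, zero_mul, sub_zero]
    _ ≤ comassBil ω := le_comassBil hskew (norm_smul_inv_norm ha) (norm_smul_inv_norm hc)

lemma eucNormBil_eq_comassBil_of_wedge [FiniteDimensional ℝ V] {m : ℕ}
    (b : OrthonormalBasis (Fin m) ℝ V) {α β : V →ₗ[ℝ] ℝ}
    (hω : ∀ x y, ω x y = α x * β y - α y * β x) :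
    eucNormBil b ω = comassBil ω := by
  obtain ⟨a, ha, -⟩ := b.exists_inner_eq_apply α
  obtain ⟨c, hc, -⟩ := b.exists_inner_eq_apply β
  obtain ⟨c', hac', hc'⟩ := exists_inner_eq_zero_wedge_eq a c
  have hω' : ∀ x y, ω x y = ⟪a, x⟫ * ⟪c', y⟫ - ⟪a, y⟫ * ⟪c', x⟫ := fun x y => by
    rw [hω, ← hc', ha, ha, hc, hc]
  have hskew : ∀ x y, ω x y = -ω y x := fun x y => by rw [hω, hω]; ring
  exact le_antisymm (eucNormBil_le_comassBil_of_wedge b hac' hω') (comassBil_le_eucNormBil b hskew)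

lemma exists_skew_isometry_of_finrank_eq_two_mul [FiniteDimensional ℝ V] {n : ℕ}
    (hV : finrank ℝ V = 2 * n) :
    ∃ J : V →ₗ[ℝ] V, (∀ x, ‖J x‖ = ‖x‖) ∧ ∀ x y, ⟪J x, y⟫ = -⟪J y, x⟫ := by
  let E := EuclideanSpace ℂ (Fin n)
  have hE : finrank ℝ V = finrank ℝ E := by
    rw [hV, finrank_real_of_complex, finrank_euclideanSpace_fin]
  let L : V ≃ₗᵢ[ℝ] E := (stdOrthonormalBasis ℝ V).equiv (stdOrthonormalBasis ℝ E) (finCongr hE)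
  let I : E →ₗ[ℝ] E := (Complex.I • LinearMap.id : E →ₗ[ℂ] E).restrictScalars ℝ
  let J := L.symm.toLinearMap ∘ₗ I ∘ₗ L.toLinearMap
  have hLJ : ∀ x, L (J x) = Complex.I • L x := fun x => by simp [J, I]
  refine ⟨J, fun x => ?_, fun x y => ?_⟩
  · rw [← L.norm_map, hLJ, norm_smul, Complex.norm_I, one_mul, L.norm_map]
  · rw [← L.inner_map_map, ← L.inner_map_map, hLJ, hLJ, EuclideanSpace.real_inner_I_smul]

lemma comassBil_innerₗ_comp_eq_one [Nontrivial V] {J : V →ₗ[ℝ] V} (hJ : ∀ x, ‖J x‖ = ‖x‖) :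
    comassBil (innerₗ V ∘ₗ J) = 1 := by
  have hle : ∀ u v : V, ‖u‖ = 1 → ‖v‖ = 1 → (innerₗ V ∘ₗ J) u v ≤ 1 := fun u v hu hv => by
    simpa [hJ, hu, hv] using real_inner_le_norm (J u) v
  obtain ⟨x, hx⟩ := exists_ne (0 : V)
  have hu : ‖‖x‖⁻¹ • x‖ = 1 := norm_smul_inv_norm hx
  refine le_antisymm (comassBil_le zero_le_one hle)
    (le_csSup ⟨1, ?_⟩ ⟨_, _, hu, (hJ _).trans hu, ?_⟩)
  · rintro _ ⟨u, v, hu, hv, rfl⟩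
    exact hle u v hu hv
  · rw [LinearMap.comp_apply, innerₗ_apply_apply, real_inner_self_eq_norm_sq, hJ, hu, one_pow]

lemma entrySqSum_innerₗ_comp_eq_card (b : OrthonormalBasis ι ℝ V) {J : V →ₗ[ℝ] V}
    (hJ : ∀ x, ‖J x‖ = ‖x‖) : entrySqSum b (innerₗ V ∘ₗ J) = Fintype.card ι := by
  simp [entrySqSum, b.sum_sq_inner_left, hJ, b.orthonormal.1]

end

/-- On an `m`-dimensional real inner product space: every (alternating) 2-covector `ω`
satisfies `‖ω‖_C ≤ ‖ω‖₂ ≤ √⌊m/2⌋ ⬝ ‖ω‖_C`; the left inequality is an equality for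
simple 2-covectors; and for `m = 2n > 0` the standard symplectic form achieves equality
on the right (it has comass `1` and Euclidean norm `√⌊m/2⌋ = √n`). -/
theorem comass_le_eucNorm_le_two_covector
    {V : Type*} [NormedAddCommGroup V] [InnerProductSpace ℝ V] [FiniteDimensional ℝ V]
    {m : ℕ} (hm : Module.finrank ℝ V = m) (b : OrthonormalBasis (Fin m) ℝ V) :
    (∀ ω : V →ₗ[ℝ] V →ₗ[ℝ] ℝ, (∀ x y, ω x y = - ω y x) →
      comassBil ω ≤ eucNormBil b ω ∧
        eucNormBil b ω ≤ Real.sqrt (m / 2 : ℕ) * comassBil ω) ∧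
    (∀ ω : V →ₗ[ℝ] V →ₗ[ℝ] ℝ,
      (∃ α β : V →ₗ[ℝ] ℝ, ∀ x y, ω x y = α x * β y - α y * β x) →
      eucNormBil b ω = comassBil ω) ∧
    (∀ n : ℕ, m = 2 * n → 0 < n →
      ∃ ω : V →ₗ[ℝ] V →ₗ[ℝ] ℝ, (∀ x y, ω x y = - ω y x) ∧
        comassBil ω = 1 ∧ eucNormBil b ω = Real.sqrt (m / 2 : ℕ) * comassBil ω) := by
  refine ⟨fun ω hω => ⟨comassBil_le_eucNormBil b hω, eucNormBil_le_sqrt_mul_comassBil hm b hω⟩,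
    fun ω ⟨α, β, hω⟩ => eucNormBil_eq_comassBil_of_wedge b hω, fun n hmn hn => ?_⟩
  obtain ⟨J, hJ, hJskew⟩ := exists_skew_isometry_of_finrank_eq_two_mul (hm.trans hmn)
  have : Nontrivial V := Module.nontrivial_of_finrank_pos (R := ℝ) (by omega)
  have hC := comassBil_innerₗ_comp_eq_one hJ
  refine ⟨innerₗ V ∘ₗ J, hJskew, hC, ?_⟩
  rw [hC, mul_one, eucNormBil_eq_sqrt_entrySqSum, entrySqSum_innerₗ_comp_eq_card b hJ,
    Fintype.card_fin, hmn, Nat.mul_div_cancel_left n two_pos]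
  push_cast
  ring_nf
end

section
/- Let β be a closed k-form (k ≥ 1) on a star-shaped open subset U ⊆ ℝ^m containing the origin. Then the (k−1)-form h_k(β) defined by the radial homotopy operator satisfies d(h_k(β)) = β, and for k > 1 and every x ∈ U: ‖h_k(β)(x)‖₂ ≤ (‖x‖/(k−1)) · √(k · (m choose k−1)) · max_{0≤t≤1} ‖β(tx)‖₂. -/
/-- The pointwise exterior derivative of a `k`-form `ω` on `ℝ^m` (a `k`-form is given by
its pointwise values on `k`-tuples of vectors), evaluated at `x` on `k+1` vectors. -/
noncomputable def extDerivAt {m k : ℕ}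
    (ω : (Fin m → ℝ) → (Fin k → (Fin m → ℝ)) → ℝ)
    (x : Fin m → ℝ) (v : Fin (k + 1) → (Fin m → ℝ)) : ℝ :=
  ∑ i : Fin (k + 1), (-1 : ℝ) ^ (i : ℕ) *
    fderiv ℝ (fun y => ω y (i.removeNth v)) x (v i)

/-- The Euclidean norm of a pointwise `k`-covector on `ℝ^m` (square root of the sum of
squares of its coefficients on the standard orthonormal wedge basis). -/
noncomputable def eucNormK (m k : ℕ) (ω : (Fin k → (Fin m → ℝ)) → ℝ) : ℝ :=
  Real.sqrt (∑ s : {t : Finset (Fin m) // t.card = k},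
    (ω (fun i => Pi.single (s.1.orderEmbOfFin s.2 i) (1 : ℝ))) ^ 2)


set_option maxHeartbeats 1000000

namespace RadialPoincareAux

open MeasureTheory Metric Set intervalIntegral
open scoped Interval

variable {m : ℕ}


/-- standard basis vector -/
noncomputable def sb (j : Fin m) : Fin m → ℝ := Pi.single j 1

lemma sum_smul_sb (y : Fin m → ℝ) : ∑ j, y j • sb j = y := by
  have h : ∀ j, y j • sb j = Pi.single j (y j) := by
    intro j; rw [sb, ← Pi.single_smul]; simp
  simp only [h]; exact Finset.univ_sum_single y

noncomputable def consLin {n : ℕ} (γ : (Fin m → ℝ) [⋀^Fin (n+1)]→ₗ[ℝ] ℝ)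
    (u : Fin n → (Fin m → ℝ)) : (Fin m → ℝ) →ₗ[ℝ] ℝ where
  toFun y := γ (Fin.cons y u)
  map_add' a b := γ.toMultilinearMap.cons_add u a b
  map_smul' c a := γ.toMultilinearMap.cons_smul u c a

lemma cons_eq_sum {n : ℕ} (γ : (Fin m → ℝ) [⋀^Fin (n+1)]→ₗ[ℝ] ℝ)
    (u : Fin n → (Fin m → ℝ)) (y : Fin m → ℝ) :
    γ (Fin.cons y u) = ∑ j, y j * γ (Fin.cons (sb j) u) := by
  have h : γ (Fin.cons y u) = consLin γ u y := rfl
  rw [h]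
  conv_lhs => rw [← sum_smul_sb y]
  rw [map_sum]
  simp [consLin, smul_eq_mul]

lemma sum_cons_removeNth {n : ℕ} (γ : (Fin m → ℝ) [⋀^Fin (n+1)]→ₗ[ℝ] ℝ)
    (v : Fin (n+1) → (Fin m → ℝ)) :
    ∑ i : Fin (n+1), (-1 : ℝ) ^ (i : ℕ) * γ (Fin.cons (v i) (i.removeNth v))
      = ((n : ℝ) + 1) * γ v := by
  have h : ∀ i : Fin (n+1),
      (-1 : ℝ) ^ (i : ℕ) * γ (Fin.cons (v i) (i.removeNth v)) = γ v := by
    intro i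
    have hv : Fin.cons (v i) (i.removeNth v) = v ∘ i.cycleRange.symm := by
      funext j
      induction j using Fin.cases with
      | zero => simp [Fin.cycleRange_symm_zero]
      | succ j' => simp [Fin.cycleRange_symm_succ, Fin.removeNth]
    have hmp : γ (v ∘ i.cycleRange.symm)
        = ((Equiv.Perm.sign i.cycleRange.symm : ℤ) : ℝ) * γ v := by
      rw [γ.map_perm, Units.smul_def, zsmul_eq_mul]
    rw [hv, hmp, Equiv.Perm.sign_symm, Fin.sign_cycleRange]
    push_cast
    rw [← mul_assoc, ← mul_pow]
    norm_num
  rw [Finset.sum_congr rfl (fun i _ => h i)]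
  simp [Finset.sum_const, Finset.card_univ]

lemma contOn_comp_smul {f : (Fin m → ℝ) → ℝ} {U : Set (Fin m → ℝ)} (hf : ContinuousOn f U)
    {x : Fin m → ℝ} (hmaps : ∀ t ∈ Icc (0:ℝ) 1, t • x ∈ U) :
    ContinuousOn (fun t : ℝ => f (t • x)) (Icc 0 1) :=
  hf.comp ((continuous_id.smul continuous_const).continuousOn) hmaps


lemma key_hasFDerivAt {k : ℕ} {U : Set (Fin m → ℝ)} (hUopen : IsOpen U)
    (hstar : ∀ x ∈ U, ∀ t ∈ Icc (0:ℝ) 1, t • x ∈ U)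
    (β : (Fin m → ℝ) → ((Fin m → ℝ) [⋀^Fin (k + 1)]→ₗ[ℝ] ℝ))
    (hsmooth : ∀ v : Fin (k+1) → (Fin m → ℝ), ContDiffOn ℝ (⊤ : ℕ∞) (fun z => β z v) U)
    {x : Fin m → ℝ} (hx : x ∈ U) (u : Fin k → (Fin m → ℝ)) :
    ∃ L : (Fin m → ℝ) →L[ℝ] ℝ,
      HasFDerivAt (fun y => ∫ t in (0:ℝ)..1, t ^ k * β (t • y) (Fin.cons y u)) L x ∧
      ∀ h, L h = ∫ t in (0:ℝ)..1,
        (t ^ k * β (t • x) (Fin.cons h u)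
          + t ^ (k+1) * fderiv ℝ (fun z => β z (Fin.cons x u)) (t • x) h) := by
  classical
  set c : Fin m → (Fin m → ℝ) → ℝ := fun j z => β z (Fin.cons (sb j) u) with hc_def
  have hc : ∀ j, ContDiffOn ℝ (⊤ : ℕ∞) (c j) U := fun j => hsmooth _
  have hcdiff : ∀ j, ∀ z ∈ U, HasFDerivAt (c j) (fderiv ℝ (c j) z) z := by
    intro j z hz
    exact (((hc j).contDiffAt (hUopen.mem_nhds hz)).differentiableAt (by simp)).hasFDerivAt
  have hcderiv_cont : ∀ j, ContinuousOn (fderiv ℝ (c j)) U :=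
    fun j => (hc j).continuousOn_fderiv_of_isOpen hUopen (by simp)
  obtain ⟨ε, εpos, hball⟩ : ∃ ε > 0, closedBall x ε ⊆ U := by
    obtain ⟨ε, εpos, h⟩ := Metric.isOpen_iff.1 hUopen x hx
    exact ⟨ε/2, by positivity, (closedBall_subset_ball (by linarith)).trans h⟩
  have hballU : ball x ε ⊆ U := ball_subset_closedBall.trans hball
  set K : Set (Fin m → ℝ) :=
    (fun p : ℝ × (Fin m → ℝ) => p.1 • p.2) '' (Icc (0:ℝ) 1 ×ˢ closedBall x ε) with hK_def
  have hKcomp : IsCompact K :=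
    (isCompact_Icc.prod (isCompact_closedBall x ε)).image (continuous_fst.smul continuous_snd)
  have hKU : K ⊆ U := by
    rintro z ⟨⟨t, y⟩, ⟨ht, hy⟩, rfl⟩
    exact hstar y (hball hy) t ht
  have hKmem : ∀ t ∈ Icc (0:ℝ) 1, ∀ y ∈ closedBall x ε, t • y ∈ K := by
    intro t ht y hy; exact ⟨(t, y), ⟨ht, hy⟩, rfl⟩
  set g : (Fin m → ℝ) → ℝ := fun z => ∑ j, (|c j z| + ‖fderiv ℝ (c j) z‖) with hg_def
  have hgcont : ContinuousOn g U := by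
    apply continuousOn_finset_sum
    intro j _
    exact ((hc j).continuousOn.abs).add ((hcderiv_cont j).norm)
  obtain ⟨M, hM⟩ := hKcomp.exists_bound_of_continuousOn (hgcont.mono hKU)
  set M' : ℝ := max M 0 with hM'_def
  have hM'0 : (0:ℝ) ≤ M' := le_max_right _ _
  have hgM : ∀ z ∈ K, g z ≤ M' := fun z hz =>
    (le_abs_self _).trans (((Real.norm_eq_abs _) ▸ hM z hz).trans (le_max_left _ _))
  set A : ℝ := 1 + ‖x‖ + ε with hA_def
  have hA1 : (1:ℝ) ≤ A := by
    have := norm_nonneg x; nlinarith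
  have hA0 : (0:ℝ) < A := lt_of_lt_of_le one_pos hA1
  have hyA : ∀ y ∈ ball x ε, ∀ j, |y j| ≤ A := by
    intro y hy j
    have h1 : ‖y j‖ ≤ ‖y‖ := norm_le_pi_norm y j
    have h2 : ‖y - x‖ < ε := mem_ball_iff_norm.mp hy
    have h3 : ‖y‖ ≤ ‖y - x‖ + ‖x‖ := by
      simpa using norm_add_le (y - x) x
    rw [Real.norm_eq_abs] at h1
    rw [hA_def]; linarith
  set C : ℝ := A * M' with hC_def
  set F' : (Fin m → ℝ) → ℝ → ((Fin m → ℝ) →L[ℝ] ℝ) := fun y t =>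
    ∑ j, ((t ^ k * c j (t • y)) • (ContinuousLinearMap.proj j : (Fin m → ℝ) →L[ℝ] ℝ)
        + (t ^ (k+1) * y j) • fderiv ℝ (c j) (t • y)) with hF'_def
  have hF'apply : ∀ y t h, F' y t h
      = ∑ j, (t ^ k * c j (t • y) * h j
          + t ^ (k+1) * y j * fderiv ℝ (c j) (t • y) h) := by
    intro y t h
    rw [hF'_def]
    simp [ContinuousLinearMap.sum_apply, ContinuousLinearMap.add_apply,
      ContinuousLinearMap.smul_apply, ContinuousLinearMap.proj_apply, smul_eq_mul, mul_assoc]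
  have h01 : Ι (0:ℝ) 1 = Ioc (0:ℝ) 1 := uIoc_of_le zero_le_one
  have hx_cls : ∀ t ∈ Icc (0:ℝ) 1, t • x ∈ U := fun t ht => hstar x hx t ht
  have h_diff0 : ∀ t ∈ Icc (0:ℝ) 1, ∀ y ∈ ball x ε,
      HasFDerivAt (fun y' => t ^ k * β (t • y') (Fin.cons y' u)) (F' y t) y := by
    intro t ht y hy
    have hyU : y ∈ U := hballU hy
    have htyU : t • y ∈ U := hstar y hyU t ht
    have heq : (fun y' => t ^ k * β (t • y') (Fin.cons y' u))
        = fun y' => ∑ j, t ^ k * (y' j * c j (t • y')) := by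
      funext y'
      rw [cons_eq_sum (β (t • y')) u y', Finset.mul_sum]
    rw [heq, hF'_def]
    refine HasFDerivAt.fun_sum (fun j _ => ?_)
    have h1 : HasFDerivAt (fun y' : Fin m → ℝ => y' j)
        (ContinuousLinearMap.proj j : (Fin m → ℝ) →L[ℝ] ℝ) y := by
      exact (ContinuousLinearMap.proj (R := ℝ) (φ := fun _ : Fin m => ℝ) j).hasFDerivAt (x := y)
    have h2 : HasFDerivAt (fun y' => c j (t • y'))
        ((fderiv ℝ (c j) (t • y)).comp (t • (ContinuousLinearMap.id ℝ (Fin m → ℝ)))) y := by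
      have hsm : HasFDerivAt (fun y' : Fin m → ℝ => t • y')
          (t • ContinuousLinearMap.id ℝ (Fin m → ℝ)) y := (hasFDerivAt_id y).const_smul t
      exact (hcdiff j (t • y) htyU).comp y hsm
    have h3 := (h1.mul h2).const_mul (t ^ k)
    refine h3.congr_fderiv ?_
    ext h
    simp [ContinuousLinearMap.comp_apply, ContinuousLinearMap.add_apply,
      ContinuousLinearMap.smul_apply, ContinuousLinearMap.proj_apply, smul_eq_mul,
      ContinuousLinearMap.map_smul]
    ring
  have hF_meas : ∀ᶠ y in nhds x,
      AEStronglyMeasurable (fun t => t ^ k * β (t • y) (Fin.cons y u))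
        (volume.restrict (Ι (0:ℝ) 1)) := by
    filter_upwards [hUopen.mem_nhds hx] with y hyU
    rw [h01]
    apply ContinuousOn.aestronglyMeasurable _ measurableSet_Ioc
    apply ContinuousOn.mono _ Ioc_subset_Icc_self
    exact ((continuous_pow k).continuousOn).mul
      (contOn_comp_smul (hsmooth (Fin.cons y u)).continuousOn (fun t ht => hstar y hyU t ht))
  have hF_int : IntervalIntegrable (fun t => t ^ k * β (t • x) (Fin.cons x u)) volume 0 1 := by
    apply ContinuousOn.intervalIntegrable
    rw [uIcc_of_le zero_le_one]
    exact ((continuous_pow k).continuousOn).mul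
      (contOn_comp_smul (hsmooth _).continuousOn hx_cls)
  have hF'contIcc : ContinuousOn (F' x) (Icc (0:ℝ) 1) := by
    rw [hF'_def]
    apply continuousOn_finset_sum
    intro j _
    apply ContinuousOn.add
    · exact (((continuous_pow k).continuousOn).mul
        (contOn_comp_smul (hc j).continuousOn hx_cls)).smul continuousOn_const
    · refine ContinuousOn.fun_smul ?_ ?_
      · exact ((continuous_pow (k+1)).continuousOn).mul continuousOn_const
      · exact (hcderiv_cont j).comp ((continuous_id.smul continuous_const).continuousOn) hx_cls
  have hF'_meas : AEStronglyMeasurable (F' x) (volume.restrict (Ι (0:ℝ) 1)) := by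
    rw [h01]
    exact (hF'contIcc.mono Ioc_subset_Icc_self).aestronglyMeasurable measurableSet_Ioc
  have h_bound : ∀ᵐ t ∂(volume : Measure ℝ), t ∈ Ι (0:ℝ) 1 →
      ∀ y ∈ ball x ε, ‖F' y t‖ ≤ C := by
    refine ae_of_all _ ?_
    intro t ht y hy
    rw [h01] at ht
    have ht' : t ∈ Icc (0:ℝ) 1 := Ioc_subset_Icc_self ht
    have htyK : t • y ∈ K := hKmem t ht' y (ball_subset_closedBall hy)
    have habs : |t| ≤ 1 := by rw [abs_of_nonneg ht'.1]; exact ht'.2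
    refine ContinuousLinearMap.opNorm_le_bound _ (by positivity) (fun h => ?_)
    rw [hF'apply, Real.norm_eq_abs]
    have htk : |t ^ k| ≤ 1 := by rw [abs_pow]; exact pow_le_one₀ (abs_nonneg _) habs
    have htk1 : |t ^ (k+1)| ≤ 1 := by rw [abs_pow]; exact pow_le_one₀ (abs_nonneg _) habs
    calc |∑ j, (t ^ k * c j (t • y) * h j
            + t ^ (k+1) * y j * fderiv ℝ (c j) (t • y) h)|
        ≤ ∑ j, |t ^ k * c j (t • y) * h j
            + t ^ (k+1) * y j * fderiv ℝ (c j) (t • y) h| := Finset.abs_sum_le_sum_abs _ _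
      _ ≤ ∑ j, (|c j (t • y)| + A * ‖fderiv ℝ (c j) (t • y)‖) * ‖h‖ := by
          apply Finset.sum_le_sum
          intro j _
          have hhj : |h j| ≤ ‖h‖ := by
            have := norm_le_pi_norm h j; rwa [Real.norm_eq_abs] at this
          have hyj : |y j| ≤ A := hyA y hy j
          have hD : |fderiv ℝ (c j) (t • y) h| ≤ ‖fderiv ℝ (c j) (t • y)‖ * ‖h‖ := by
            have := (fderiv ℝ (c j) (t • y)).le_opNorm h
            rwa [Real.norm_eq_abs] at this
          have e1 : |t ^ k * c j (t • y) * h j| ≤ |c j (t • y)| * ‖h‖ := by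
            rw [abs_mul, abs_mul]
            have h5 : |t ^ k| * |c j (t • y)| ≤ |c j (t • y)| := by
              nlinarith [abs_nonneg (c j (t • y)), abs_nonneg (t ^ k)]
            exact mul_le_mul h5 hhj (abs_nonneg _) (abs_nonneg _)
          have e2 : |t ^ (k+1) * y j * fderiv ℝ (c j) (t • y) h|
              ≤ A * (‖fderiv ℝ (c j) (t • y)‖ * ‖h‖) := by
            rw [abs_mul, abs_mul]
            have h6 : |t ^ (k+1)| * |y j| ≤ A := by
              nlinarith [abs_nonneg (y j), abs_nonneg (t ^ (k+1))]
            exact mul_le_mul h6 hD (abs_nonneg _) (le_of_lt hA0)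
          calc |t ^ k * c j (t • y) * h j + t ^ (k+1) * y j * fderiv ℝ (c j) (t • y) h|
              ≤ |t ^ k * c j (t • y) * h j|
                + |t ^ (k+1) * y j * fderiv ℝ (c j) (t • y) h| := abs_add_le _ _
            _ ≤ |c j (t • y)| * ‖h‖ + A * (‖fderiv ℝ (c j) (t • y)‖ * ‖h‖) :=
                add_le_add e1 e2
            _ = (|c j (t • y)| + A * ‖fderiv ℝ (c j) (t • y)‖) * ‖h‖ := by ring
      _ = (∑ j, (|c j (t • y)| + A * ‖fderiv ℝ (c j) (t • y)‖)) * ‖h‖ :=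
          (Finset.sum_mul _ _ _).symm
      _ ≤ (A * g (t • y)) * ‖h‖ := by
          apply mul_le_mul_of_nonneg_right _ (norm_nonneg h)
          rw [hg_def, Finset.mul_sum]
          apply Finset.sum_le_sum
          intro j _
          nlinarith [abs_nonneg (c j (t • y)), norm_nonneg (fderiv ℝ (c j) (t • y))]
      _ ≤ C * ‖h‖ := by
          apply mul_le_mul_of_nonneg_right _ (norm_nonneg h)
          rw [hC_def]
          exact mul_le_mul_of_nonneg_left (hgM _ htyK) (le_of_lt hA0)
  have h_diff : ∀ᵐ t ∂(volume : Measure ℝ), t ∈ Ι (0:ℝ) 1 →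
      ∀ y ∈ ball x ε, HasFDerivAt (fun y' => t ^ k * β (t • y') (Fin.cons y' u)) (F' y t) y := by
    refine ae_of_all _ ?_
    intro t ht y hy
    rw [h01] at ht
    exact h_diff0 t (Ioc_subset_Icc_self ht) y hy
  have HD := intervalIntegral.hasFDerivAt_integral_of_dominated_of_fderiv_le
    (μ := volume) (F := fun y t => t ^ k * β (t • y) (Fin.cons y u)) (F' := F')
    (bound := fun _ => C) (ball_mem_nhds x εpos) hF_meas hF_int hF'_meas h_bound intervalIntegrable_const h_diff
  refine ⟨_, HD, ?_⟩
  intro h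
  have hint : IntervalIntegrable (F' x) volume 0 1 := by
    apply ContinuousOn.intervalIntegrable
    rwa [uIcc_of_le zero_le_one]
  have happ : (∫ t in (0:ℝ)..1, F' x t) h = ∫ t in (0:ℝ)..1, (F' x t) h := by
    rw [intervalIntegral.integral_of_le zero_le_one, intervalIntegral.integral_of_le zero_le_one]
    exact ContinuousLinearMap.integral_apply hint.1 h
  rw [happ]
  apply intervalIntegral.integral_congr
  intro t ht
  rw [uIcc_of_le zero_le_one] at ht
  have htxU : t • x ∈ U := hx_cls t ht
  show (F' x t) h = t ^ k * β (t • x) (Fin.cons h u)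
      + t ^ (k+1) * fderiv ℝ (fun z => β z (Fin.cons x u)) (t • x) h
  have hfd : fderiv ℝ (fun z => β z (Fin.cons x u)) (t • x)
      = ∑ j, x j • fderiv ℝ (c j) (t • x) := by
    have hfun : (fun z => β z (Fin.cons x u)) = fun z => ∑ j, x j * c j z := by
      funext z; exact cons_eq_sum (β z) u x
    have hHD : HasFDerivAt (fun z => β z (Fin.cons x u))
        (∑ j, x j • fderiv ℝ (c j) (t • x)) (t • x) := by
      rw [hfun]
      exact HasFDerivAt.fun_sum (fun j _ => (hcdiff j _ htxU).const_mul (x j))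
    exact hHD.fderiv
  rw [hF'apply, hfd, cons_eq_sum (β (t • x)) u h]
  rw [ContinuousLinearMap.sum_apply, Finset.mul_sum, Finset.mul_sum, ← Finset.sum_add_distrib]
  apply Finset.sum_congr rfl
  intro j _
  rw [ContinuousLinearMap.smul_apply, smul_eq_mul]
  ring


lemma removeNth_succ_cons {n : ℕ} (x : Fin m → ℝ) (v : Fin (n+1) → (Fin m → ℝ)) (i : Fin (n+1)) :
    (Fin.succ i).removeNth (Fin.cons (α := fun _ : Fin (n+2) => Fin m → ℝ) x v)
      = Fin.cons x (i.removeNth v) := by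
  funext j
  induction j using Fin.cases with
  | zero => simp [Fin.removeNth, Fin.succ_succAbove_zero]
  | succ j' => simp [Fin.removeNth, Fin.succ_succAbove_succ]

lemma part1 {k : ℕ} {U : Set (Fin m → ℝ)} (hUopen : IsOpen U)
    (hstar : ∀ x ∈ U, ∀ t ∈ Icc (0:ℝ) 1, t • x ∈ U)
    (β : (Fin m → ℝ) → ((Fin m → ℝ) [⋀^Fin (k + 1)]→ₗ[ℝ] ℝ))
    (hsmooth : ∀ v : Fin (k+1) → (Fin m → ℝ), ContDiffOn ℝ (⊤ : ℕ∞) (fun z => β z v) U)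
    (hclosed : ∀ x ∈ U, ∀ v : Fin (k + 2) → (Fin m → ℝ),
      extDerivAt (fun y w => β y w) x v = 0)
    {x : Fin m → ℝ} (hx : x ∈ U) (v : Fin (k+1) → (Fin m → ℝ)) :
    extDerivAt (fun y w => ∫ t in (0 : ℝ)..1, t ^ k * β (t • y) (Fin.cons y w)) x v
      = β x v := by
  have hx_cls : ∀ t ∈ Icc (0:ℝ) 1, t • x ∈ U := fun t ht => hstar x hx t ht
  -- continuity helpers
  have hcont1 : ∀ w : Fin (k+1) → (Fin m → ℝ),
      ContinuousOn (fun t : ℝ => β (t • x) w) (Icc 0 1) :=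
    fun w => contOn_comp_smul (hsmooth w).continuousOn hx_cls
  have hcont2 : ∀ (w : Fin (k+1) → (Fin m → ℝ)) (h0 : Fin m → ℝ),
      ContinuousOn (fun t : ℝ => fderiv ℝ (fun z => β z w) (t • x) h0) (Icc 0 1) :=
    fun w h0 => ((((hsmooth w).continuousOn_fderiv_of_isOpen hUopen (by simp)).comp
      ((continuous_id.smul continuous_const).continuousOn) hx_cls).clm_apply continuousOn_const)
  have hterm : ∀ i : Fin (k+1),
      fderiv ℝ (fun y => ∫ t in (0:ℝ)..1, t ^ k * β (t • y) (Fin.cons y (i.removeNth v))) x (v i)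
        = ∫ t in (0:ℝ)..1, (t ^ k * β (t • x) (Fin.cons (v i) (i.removeNth v))
            + t ^ (k+1) * fderiv ℝ (fun z => β z (Fin.cons x (i.removeNth v))) (t • x) (v i)) := by
    intro i
    obtain ⟨L, h1, h2⟩ := key_hasFDerivAt hUopen hstar β hsmooth hx (i.removeNth v)
    rw [h1.fderiv]; exact h2 (v i)
  have hInt : ∀ i : Fin (k+1), IntervalIntegrable
      (fun t : ℝ => (-1:ℝ)^(i:ℕ) * (t ^ k * β (t • x) (Fin.cons (v i) (i.removeNth v))
        + t ^ (k+1) * fderiv ℝ (fun z => β z (Fin.cons x (i.removeNth v))) (t • x) (v i)))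
      volume 0 1 := by
    intro i
    apply ContinuousOn.intervalIntegrable
    rw [uIcc_of_le zero_le_one]
    exact continuousOn_const.mul
      ((((continuous_pow k).continuousOn).mul (hcont1 _)).add
        (((continuous_pow (k+1)).continuousOn).mul (hcont2 _ _)))
  calc extDerivAt (fun y w => ∫ t in (0 : ℝ)..1, t ^ k * β (t • y) (Fin.cons y w)) x v
      = ∑ i : Fin (k+1), (-1:ℝ)^(i:ℕ) *
          ∫ t in (0:ℝ)..1, (t ^ k * β (t • x) (Fin.cons (v i) (i.removeNth v))
            + t ^ (k+1) * fderiv ℝ (fun z => β z (Fin.cons x (i.removeNth v))) (t • x) (v i)) := by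
        rw [extDerivAt]
        exact Finset.sum_congr rfl (fun i _ => by rw [hterm i])
    _ = ∑ i : Fin (k+1), ∫ t in (0:ℝ)..1,
          (-1:ℝ)^(i:ℕ) * (t ^ k * β (t • x) (Fin.cons (v i) (i.removeNth v))
            + t ^ (k+1) * fderiv ℝ (fun z => β z (Fin.cons x (i.removeNth v))) (t • x) (v i)) := by
        exact Finset.sum_congr rfl (fun i _ => (intervalIntegral.integral_const_mul _ _).symm)
    _ = ∫ t in (0:ℝ)..1, ∑ i : Fin (k+1),
          (-1:ℝ)^(i:ℕ) * (t ^ k * β (t • x) (Fin.cons (v i) (i.removeNth v))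
            + t ^ (k+1) * fderiv ℝ (fun z => β z (Fin.cons x (i.removeNth v))) (t • x) (v i)) :=
        (intervalIntegral.integral_finset_sum (fun i _ => hInt i)).symm
    _ = ∫ t in (0:ℝ)..1, (((k:ℝ)+1) * t ^ k * β (t • x) v
          + t ^ (k+1) * fderiv ℝ (fun z => β z v) (t • x) x) := by
        apply intervalIntegral.integral_congr
        intro t ht
        rw [uIcc_of_le zero_le_one] at ht
        have htxU : t • x ∈ U := hx_cls t ht
        have hsplit : ∑ i : Fin (k+1),
            (-1:ℝ)^(i:ℕ) * (t ^ k * β (t • x) (Fin.cons (v i) (i.removeNth v))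
              + t ^ (k+1) * fderiv ℝ (fun z => β z (Fin.cons x (i.removeNth v))) (t • x) (v i))
            = t ^ k * (∑ i : Fin (k+1), (-1:ℝ)^(i:ℕ) * β (t • x) (Fin.cons (v i) (i.removeNth v)))
              + t ^ (k+1) * (∑ i : Fin (k+1), (-1:ℝ)^(i:ℕ) *
                fderiv ℝ (fun z => β z (Fin.cons x (i.removeNth v))) (t • x) (v i)) := by
          rw [Finset.mul_sum, Finset.mul_sum, ← Finset.sum_add_distrib]
          exact Finset.sum_congr rfl (fun i _ => by ring)
        have hcycle := sum_cons_removeNth (β (t • x)) v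
        have hcc := hclosed (t • x) htxU (Fin.cons x v)
        rw [extDerivAt, Fin.sum_univ_succ] at hcc
        simp only [Fin.val_zero, pow_zero, one_mul, Fin.cons_zero, Fin.removeNth_zero,
          Fin.tail_cons, Fin.cons_succ, removeNth_succ_cons, Fin.val_succ] at hcc
        have hD : ∑ i : Fin (k+1), (-1:ℝ)^(i:ℕ) *
            fderiv ℝ (fun z => β z (Fin.cons x (i.removeNth v))) (t • x) (v i)
            = fderiv ℝ (fun z => β z v) (t • x) x := by
          have h2 : ∑ i : Fin (k+1), (-1:ℝ)^((i:ℕ)+1) *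
              fderiv ℝ (fun z => β z (Fin.cons x (i.removeNth v))) (t • x) (v i)
              = - ∑ i : Fin (k+1), (-1:ℝ)^(i:ℕ) *
                fderiv ℝ (fun z => β z (Fin.cons x (i.removeNth v))) (t • x) (v i) := by
            rw [← Finset.sum_neg_distrib]
            exact Finset.sum_congr rfl (fun i _ => by ring)
          rw [h2] at hcc
          linarith
        beta_reduce
        rw [hsplit, hcycle, hD]
        ring
    _ = β x v := by
        have hderiv : ∀ t ∈ uIcc (0:ℝ) 1, HasDerivAt (fun s : ℝ => s^(k+1) * β (s • x) v)
            (((k:ℝ)+1) * t ^ k * β (t • x) v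
              + t ^ (k+1) * fderiv ℝ (fun z => β z v) (t • x) x) t := by
          intro t ht
          rw [uIcc_of_le zero_le_one] at ht
          have htxU : t • x ∈ U := hx_cls t ht
          have hd1 : HasDerivAt (fun s : ℝ => s • x) x t := by
            simpa using (hasDerivAt_id t).smul_const x
          have hd2 : HasFDerivAt (fun z => β z v) (fderiv ℝ (fun z => β z v) (t • x)) (t • x) :=
            (((hsmooth v).contDiffAt (hUopen.mem_nhds htxU)).differentiableAt (by simp)).hasFDerivAt
          have hd3 : HasDerivAt (fun s : ℝ => β (s • x) v)
              (fderiv ℝ (fun z => β z v) (t • x) x) t := by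
            exact hd2.comp_hasDerivAt t hd1
          have hd4 := (hasDerivAt_pow (k+1) t).mul hd3
          refine hd4.congr_deriv ?_
          rw [Nat.add_sub_cancel]
          push_cast
          ring_nf
        have hint' : IntervalIntegrable (fun t : ℝ => ((k:ℝ)+1) * t ^ k * β (t • x) v
            + t ^ (k+1) * fderiv ℝ (fun z => β z v) (t • x) x) volume 0 1 := by
          apply ContinuousOn.intervalIntegrable
          rw [uIcc_of_le zero_le_one]
          exact ((continuousOn_const.mul (continuous_pow k).continuousOn).mul (hcont1 v)).add
            (((continuous_pow (k+1)).continuousOn).mul (hcont2 v x))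
        rw [intervalIntegral.integral_eq_sub_of_hasDerivAt hderiv hint']
        simp

lemma sq_perm (n : ℕ) (γ : (Fin m → ℝ) [⋀^Fin n]→ₗ[ℝ] ℝ) (g₁ g₂ : Fin n → Fin m)
    (h₁ : Function.Injective g₁) (h₂ : Function.Injective g₂)
    (hr : Set.range g₁ = Set.range g₂) :
    (γ (fun i => sb (g₁ i)))^2 = (γ (fun i => sb (g₂ i)))^2 := by
  classical
  set σ : Fin n ≃ Fin n :=
    (Equiv.ofInjective g₂ h₂).trans ((Equiv.setCongr hr.symm).trans
      (Equiv.ofInjective g₁ h₁).symm) with hσ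
  have hcomp : ∀ j, g₁ (σ j) = g₂ j := by
    intro j
    show g₁ ((Equiv.ofInjective g₁ h₁).symm
      (Equiv.setCongr hr.symm (Equiv.ofInjective g₂ h₂ j))) = g₂ j
    rw [Equiv.apply_ofInjective_symm h₁]
    rfl
  have hfun : (fun i => sb (g₂ i)) = (fun i => sb (g₁ i)) ∘ σ := by
    funext j; simp [Function.comp, hcomp j]
  rw [hfun, γ.map_perm]
  rcases Int.units_eq_one_or (Equiv.Perm.sign σ) with h | h <;>
    rw [h] <;> simp [Units.smul_def]

lemma comb_eq {n : ℕ} (γ : (Fin m → ℝ) [⋀^Fin (n+1)]→ₗ[ℝ] ℝ) :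
    ∑ s : {t : Finset (Fin m) // t.card = n},
      ∑ j : Fin m, (γ (Fin.cons (sb j) (fun i => sb (s.1.orderEmbOfFin s.2 i))))^2
    = ((n:ℝ)+1) * ∑ T : {t : Finset (Fin m) // t.card = n+1},
        (γ (fun i => sb (T.1.orderEmbOfFin T.2 i)))^2 := by
  classical
  set q : Finset (Fin m) → Fin m → ℝ := fun s j =>
    if hs : s.card = n then (γ (Fin.cons (sb j) (fun i => sb (s.orderEmbOfFin hs i))))^2
    else 0 with hq
  set R : Finset (Fin m) → ℝ := fun T =>
    if hT : T.card = n+1 then (γ (fun i => sb (T.orderEmbOfFin hT i)))^2 else 0 with hR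
  have hq0 : ∀ s : Finset (Fin m), ∀ hs : s.card = n, ∀ j ∈ s, q s j = 0 := by
    intro s hs j hj
    obtain ⟨i₀, hi₀⟩ : ∃ i₀, s.orderEmbOfFin hs i₀ = j := by
      have : j ∈ Set.range (s.orderEmbOfFin hs) := by
        rw [Finset.range_orderEmbOfFin]; exact_mod_cast hj
      exact this
    have hzero : γ (Fin.cons (sb j) (fun i => sb (s.orderEmbOfFin hs i))) = 0 := by
      apply AlternatingMap.map_eq_zero_of_eq _ _
        (i := (0 : Fin (n+1))) (j := Fin.succ i₀) _ (Fin.succ_ne_zero i₀).symm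
      simp [hi₀]
    rw [hq]; simp only [dif_pos hs]  -- well, hs is defeq proof
    rw [hzero]; ring
  have hq1 : ∀ s : Finset (Fin m), ∀ hs : s.card = n, ∀ j, j ∉ s →
      q s j = R (insert j s) := by
    intro s hs j hj
    have hcard : (insert j s).card = n+1 := by
      rw [Finset.card_insert_of_notMem hj, hs]
    rw [hq, hR]
    simp only [dif_pos hs, dif_pos hcard]
    have hemb : (Fin.cons (sb j) (fun i => sb (s.orderEmbOfFin hs i)) : Fin (n+1) → Fin m → ℝ)
        = fun i => sb (Fin.cons (α := fun _ : Fin (n+1) => Fin m) j (s.orderEmbOfFin hs) i) := by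
      funext i
      induction i using Fin.cases with
      | zero => simp
      | succ i' => simp
    rw [hemb]
    apply sq_perm
    · rw [Fin.cons_injective_iff]
      refine ⟨?_, (s.orderEmbOfFin hs).injective⟩
      rw [Finset.range_orderEmbOfFin]
      exact_mod_cast hj
    · exact ((insert j s).orderEmbOfFin hcard).injective
    · rw [Fin.range_cons, Finset.range_orderEmbOfFin, Finset.range_orderEmbOfFin,
        ← Finset.coe_insert]
  -- convert subtype sums to powersetCard sums
  have hLHS : ∑ s : {t : Finset (Fin m) // t.card = n},
      ∑ j : Fin m, (γ (Fin.cons (sb j) (fun i => sb (s.1.orderEmbOfFin s.2 i))))^2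
      = ∑ s ∈ Finset.powersetCard n Finset.univ, ∑ j : Fin m, q s j := by
    rw [Finset.sum_subtype (Finset.powersetCard n Finset.univ)
      (fun x => Finset.mem_powersetCard_univ) (fun s => ∑ j : Fin m, q s j)]
    apply Finset.sum_congr rfl
    intro s _
    apply Finset.sum_congr rfl
    intro j _
    simp only [hq]
    rw [dif_pos s.2]
  have hRHS : ∑ T : {t : Finset (Fin m) // t.card = n+1},
      (γ (fun i => sb (T.1.orderEmbOfFin T.2 i)))^2
      = ∑ T ∈ Finset.powersetCard (n+1) Finset.univ, R T := by
    rw [Finset.sum_subtype (Finset.powersetCard (n+1) Finset.univ)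
      (fun x => Finset.mem_powersetCard_univ) R]
    apply Finset.sum_congr rfl
    intro T _
    simp only [hR]
    rw [dif_pos T.2]
  rw [hLHS, hRHS]
  have step1 : ∑ s ∈ Finset.powersetCard n Finset.univ, ∑ j : Fin m, q s j
      = ∑ s ∈ Finset.powersetCard n Finset.univ, ∑ j ∈ sᶜ, q s j := by
    apply Finset.sum_congr rfl
    intro s hsmem
    have hs : s.card = n := Finset.mem_powersetCard_univ.mp hsmem
    refine (Finset.sum_subset (Finset.subset_univ _) ?_).symm
    intro j _ hj
    exact hq0 s hs j (by simpa using hj)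
  have step2 : ∑ s ∈ Finset.powersetCard n Finset.univ, ∑ j ∈ sᶜ, q s j
      = ∑ s ∈ Finset.powersetCard n Finset.univ, ∑ j ∈ sᶜ, R (insert j s) := by
    apply Finset.sum_congr rfl
    intro s hsmem
    have hs : s.card = n := Finset.mem_powersetCard_univ.mp hsmem
    apply Finset.sum_congr rfl
    intro j hj
    exact hq1 s hs j (by simpa using hj)
  have step3 : ∑ s ∈ Finset.powersetCard n Finset.univ, ∑ j ∈ sᶜ, R (insert j s)
      = ∑ T ∈ Finset.powersetCard (n+1) Finset.univ, ∑ j ∈ T, R T := by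
    rw [Finset.sum_sigma', Finset.sum_sigma']
    refine Finset.sum_nbij' (fun p => ⟨insert p.2 p.1, p.2⟩) (fun p => ⟨p.1.erase p.2, p.2⟩)
      ?_ ?_ ?_ ?_ ?_
    · rintro ⟨s, j⟩ hmem
      rw [Finset.mem_sigma] at hmem ⊢
      obtain ⟨hs, hj⟩ := hmem
      have hs' : s.card = n := Finset.mem_powersetCard_univ.mp hs
      have hj' : j ∉ s := by simpa using hj
      exact ⟨Finset.mem_powersetCard_univ.mpr
        (by rw [Finset.card_insert_of_notMem hj', hs']), Finset.mem_insert_self _ _⟩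
    · rintro ⟨T, j⟩ hmem
      rw [Finset.mem_sigma] at hmem ⊢
      obtain ⟨hT, hj⟩ := hmem
      have hT' : T.card = n+1 := Finset.mem_powersetCard_univ.mp hT
      refine ⟨Finset.mem_powersetCard_univ.mpr ?_, by simp [Finset.mem_compl]⟩
      rw [Finset.card_erase_of_mem hj, hT']
      omega
    · rintro ⟨s, j⟩ hmem
      rw [Finset.mem_sigma] at hmem
      have hj' : j ∉ s := by simpa using hmem.2
      simp only [Finset.erase_insert hj']
    · rintro ⟨T, j⟩ hmem
      rw [Finset.mem_sigma] at hmem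
      simp only [Finset.insert_erase hmem.2]
    · rintro ⟨s, j⟩ _
      rfl
  have step4 : ∑ T ∈ Finset.powersetCard (n+1) Finset.univ, ∑ j ∈ T, R T
      = ((n:ℝ)+1) * ∑ T ∈ Finset.powersetCard (n+1) Finset.univ, R T := by
    rw [Finset.mul_sum]
    apply Finset.sum_congr rfl
    intro T hT
    have hT' : T.card = n+1 := Finset.mem_powersetCard_univ.mp hT
    rw [Finset.sum_const, hT', nsmul_eq_mul]
    push_cast
    ring
  rw [step1, step2, step3, step4]

lemma weighted_cs {k : ℕ} (g : ℝ → ℝ) (hg : ContinuousOn g (Icc 0 1)) :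
    (∫ t in (0:ℝ)..1, t ^ k * g t)^2
      ≤ (1/((k:ℝ)+1)) * ∫ t in (0:ℝ)..1, t ^ k * (g t)^2 := by
  set I := ∫ t in (0:ℝ)..1, t ^ k * g t with hI
  have hpowc : ContinuousOn (fun t : ℝ => t ^ k) (Icc 0 1) := (continuous_pow k).continuousOn
  have hi1 : IntervalIntegrable (fun t => t ^ k * g t) volume 0 1 := by
    apply ContinuousOn.intervalIntegrable; rw [uIcc_of_le zero_le_one]; exact hpowc.mul hg
  have hi2 : IntervalIntegrable (fun t => t ^ k * (g t)^2) volume 0 1 := by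
    apply ContinuousOn.intervalIntegrable; rw [uIcc_of_le zero_le_one]
    exact hpowc.mul (hg.pow 2)
  have hi3 : IntervalIntegrable (fun t : ℝ => t ^ k) volume 0 1 :=
    intervalIntegral.intervalIntegrable_pow k
  have hpos : (0:ℝ) ≤ ∫ t in (0:ℝ)..1, t ^ k * (g t - ((k:ℝ)+1) * I)^2 := by
    apply intervalIntegral.integral_nonneg zero_le_one
    intro t ht
    have h0 := ht.1
    positivity
  have hpowint : ∫ t in (0:ℝ)..1, t ^ k = 1/((k:ℝ)+1) := by
    rw [integral_pow]
    push_cast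
    norm_num
  have hexpand : ∫ t in (0:ℝ)..1, t ^ k * (g t - ((k:ℝ)+1) * I)^2
      = (∫ t in (0:ℝ)..1, t ^ k * (g t)^2) - 2*((k:ℝ)+1)*I*I
        + (((k:ℝ)+1)*I)^2 * (1/((k:ℝ)+1)) := by
    have hfun : (fun t => t ^ k * (g t - ((k:ℝ)+1) * I)^2)
        = fun t => (t ^ k * (g t)^2 - (2*((k:ℝ)+1)*I) * (t ^ k * g t))
          + (((k:ℝ)+1)*I)^2 * t ^ k := by
      funext t; ring
    rw [hfun, intervalIntegral.integral_add (hi2.sub (hi1.const_mul _)) (hi3.const_mul _),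
      intervalIntegral.integral_sub hi2 (hi1.const_mul _),
      intervalIntegral.integral_const_mul, intervalIntegral.integral_const_mul,
      hpowint, ← hI]
  have hk1 : (0:ℝ) < (k:ℝ)+1 := by positivity
  rw [hexpand] at hpos
  have hsimp : (((k:ℝ)+1)*I)^2 * (1/((k:ℝ)+1)) = ((k:ℝ)+1)*I^2 := by
    field_simp
  rw [hsimp] at hpos
  calc I^2 ≤ (∫ t in (0:ℝ)..1, t ^ k * (g t)^2) / ((k:ℝ)+1) := by
        rw [le_div_iff₀ hk1]; nlinarith
    _ = (1/((k:ℝ)+1)) * ∫ t in (0:ℝ)..1, t ^ k * (g t)^2 := by ring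

lemma hpowint {k : ℕ} : ∫ t in (0:ℝ)..1, t ^ k = 1/((k:ℝ)+1) := by
  rw [integral_pow]
  push_cast
  norm_num

lemma part2 {k : ℕ} {U : Set (Fin m → ℝ)} (hUopen : IsOpen U)
    (hstar : ∀ x ∈ U, ∀ t ∈ Icc (0:ℝ) 1, t • x ∈ U)
    (β : (Fin m → ℝ) → ((Fin m → ℝ) [⋀^Fin (k + 1)]→ₗ[ℝ] ℝ))
    (hsmooth : ∀ v : Fin (k+1) → (Fin m → ℝ), ContDiffOn ℝ (⊤ : ℕ∞) (fun z => β z v) U)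
    (hk : 1 ≤ k) {x : Fin m → ℝ} (hx : x ∈ U) :
    eucNormK m k (fun w => ∫ t in (0 : ℝ)..1, t ^ k * β (t • x) (Fin.cons x w)) ≤
      (Real.sqrt (∑ i, x i ^ 2) / k) * Real.sqrt ((k + 1) * m.choose k) *
        ⨆ t : Icc (0 : ℝ) 1, eucNormK m (k + 1) (fun w => β ((t : ℝ) • x) w) := by
  classical
  have hx_cls : ∀ t ∈ Icc (0:ℝ) 1, t • x ∈ U := hstar x hx
  set X2 : ℝ := ∑ i, x i ^ 2 with hX2
  have hX2nn : (0:ℝ) ≤ X2 := Finset.sum_nonneg (fun i _ => sq_nonneg _)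
  set S : ℝ := ⨆ t : Icc (0 : ℝ) 1, eucNormK m (k + 1) (fun w => β ((t : ℝ) • x) w) with hS
  have hS0 : 0 ≤ S := Real.iSup_nonneg (fun t => Real.sqrt_nonneg _)
  have hknn : (0:ℝ) ≤ (k:ℝ) := Nat.cast_nonneg k
  have hRHSnn : 0 ≤ (Real.sqrt X2 / k) * Real.sqrt (((k:ℝ) + 1) * m.choose k) * S :=
    mul_nonneg (mul_nonneg (div_nonneg (Real.sqrt_nonneg _) hknn) (Real.sqrt_nonneg _)) hS0
  by_cases hkm : k ≤ m
  swap
  · -- k > m : the left-hand side is zero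
    have hempty : IsEmpty {t : Finset (Fin m) // t.card = k} := by
      constructor
      rintro ⟨s, hs⟩
      apply hkm
      rw [← hs]
      simpa using Finset.card_le_univ s
    rw [eucNormK, Finset.univ_eq_empty, Finset.sum_empty, Real.sqrt_zero]
    exact hRHSnn
  -- main case
  set N : ℝ → ℝ := fun t => Real.sqrt (∑ T : {s : Finset (Fin m) // s.card = k+1},
    (β (t • x) (fun i => sb (T.1.orderEmbOfFin T.2 i)))^2) with hN
  have hNnn : ∀ t, 0 ≤ N t := fun t => Real.sqrt_nonneg _
  have hNcont : ContinuousOn N (Icc 0 1) := by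
    apply Real.continuous_sqrt.comp_continuousOn
    apply continuousOn_finset_sum
    intro T _
    exact (contOn_comp_smul (hsmooth _).continuousOn hx_cls).pow 2
  have hSalt : S = ⨆ t : Icc (0 : ℝ) 1, N ↑t := by rw [hS]; congr 1
  have hbdd : BddAbove (Set.range fun t : Icc (0:ℝ) 1 => N ↑t) := by
    have himg := (isCompact_Icc.image_of_continuousOn hNcont).bddAbove
    rwa [show (fun t : Icc (0:ℝ) 1 => N ↑t) = N ∘ Subtype.val from rfl, Set.range_comp,
      Subtype.range_coe] 
  have hNle : ∀ t ∈ Icc (0:ℝ) 1, N t ≤ S := by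
    intro t ht
    rw [hSalt]
    exact le_ciSup hbdd ⟨t, ht⟩
  set g : {s : Finset (Fin m) // s.card = k} → ℝ → ℝ := fun s t =>
    β (t • x) (Fin.cons x (fun i => sb (s.1.orderEmbOfFin s.2 i))) with hg
  have hgcont : ∀ s, ContinuousOn (g s) (Icc 0 1) :=
    fun s => contOn_comp_smul (hsmooth _).continuousOn hx_cls
  have hgi : ∀ s, IntervalIntegrable (fun t => t ^ k * (g s t)^2) volume 0 1 := by
    intro s
    apply ContinuousOn.intervalIntegrable
    rw [uIcc_of_le zero_le_one]
    exact (continuous_pow k).continuousOn.mul ((hgcont s).pow 2)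
  set a : {s : Finset (Fin m) // s.card = k} → ℝ := fun s =>
    ∫ t in (0:ℝ)..1, t ^ k * g s t with ha
  have key1 : ∀ s, (a s)^2 ≤ (1/((k:ℝ)+1)) * ∫ t in (0:ℝ)..1, t ^ k * (g s t)^2 :=
    fun s => weighted_cs (g s) (hgcont s)
  have key2 : ∀ t ∈ Icc (0:ℝ) 1,
      ∑ s : {s : Finset (Fin m) // s.card = k}, (g s t)^2 ≤ X2 * (((k:ℝ)+1) * S^2) := by
    intro t ht
    have hNsq : (N t)^2 = ∑ T : {s : Finset (Fin m) // s.card = k+1},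
        (β (t • x) (fun i => sb (T.1.orderEmbOfFin T.2 i)))^2 := by
      rw [hN]
      exact Real.sq_sqrt (Finset.sum_nonneg (fun T _ => sq_nonneg _))
    calc ∑ s : {s : Finset (Fin m) // s.card = k}, (g s t)^2
        ≤ ∑ s : {s : Finset (Fin m) // s.card = k}, X2 *
            ∑ j : Fin m, (β (t • x) (Fin.cons (sb j)
              (fun i => sb (s.1.orderEmbOfFin s.2 i))))^2 := by
          apply Finset.sum_le_sum
          intro s _
          rw [hg]
          beta_reduce
          rw [cons_eq_sum (β (t • x)) _ x]
          exact Finset.sum_mul_sq_le_sq_mul_sq Finset.univ _ _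
      _ = X2 * ∑ s : {s : Finset (Fin m) // s.card = k}, ∑ j : Fin m,
            (β (t • x) (Fin.cons (sb j) (fun i => sb (s.1.orderEmbOfFin s.2 i))))^2 := by
          rw [Finset.mul_sum]
      _ = X2 * (((k:ℝ)+1) * ∑ T : {s : Finset (Fin m) // s.card = k+1},
            (β (t • x) (fun i => sb (T.1.orderEmbOfFin T.2 i)))^2) := by
          rw [comb_eq (β (t • x))]
      _ = X2 * (((k:ℝ)+1) * (N t)^2) := by rw [hNsq]
      _ ≤ X2 * (((k:ℝ)+1) * S^2) := by
          apply mul_le_mul_of_nonneg_left _ hX2nn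
          apply mul_le_mul_of_nonneg_left _ (by positivity)
          exact pow_le_pow_left₀ (hNnn t) (hNle t ht) 2
  have key3 : ∑ s : {s : Finset (Fin m) // s.card = k}, (a s)^2
      ≤ X2 * S^2 * (1/((k:ℝ)+1)) := by
    have hconst : IntervalIntegrable (fun t : ℝ => t ^ k * (X2 * (((k:ℝ)+1) * S^2)))
        volume 0 1 := by
      apply ContinuousOn.intervalIntegrable
      rw [uIcc_of_le zero_le_one]
      exact (continuous_pow k).continuousOn.mul continuousOn_const
    have hsumint : IntervalIntegrable (fun t : ℝ => t ^ k *
        ∑ s : {s : Finset (Fin m) // s.card = k}, (g s t)^2) volume 0 1 := by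
      apply ContinuousOn.intervalIntegrable
      rw [uIcc_of_le zero_le_one]
      exact (continuous_pow k).continuousOn.mul
        (continuousOn_finset_sum _ (fun s _ => (hgcont s).pow 2))
    calc ∑ s : {s : Finset (Fin m) // s.card = k}, (a s)^2
        ≤ ∑ s : {s : Finset (Fin m) // s.card = k},
            (1/((k:ℝ)+1)) * ∫ t in (0:ℝ)..1, t ^ k * (g s t)^2 :=
          Finset.sum_le_sum (fun s _ => key1 s)
      _ = (1/((k:ℝ)+1)) * ∑ s : {s : Finset (Fin m) // s.card = k},
            ∫ t in (0:ℝ)..1, t ^ k * (g s t)^2 := (Finset.mul_sum _ _ _).symm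
      _ = (1/((k:ℝ)+1)) * ∫ t in (0:ℝ)..1,
            ∑ s : {s : Finset (Fin m) // s.card = k}, t ^ k * (g s t)^2 := by
          rw [intervalIntegral.integral_finset_sum (fun s _ => hgi s)]
      _ = (1/((k:ℝ)+1)) * ∫ t in (0:ℝ)..1,
            t ^ k * ∑ s : {s : Finset (Fin m) // s.card = k}, (g s t)^2 := by
          congr 1
          apply intervalIntegral.integral_congr
          intro t _
          beta_reduce
          rw [Finset.mul_sum]
      _ ≤ (1/((k:ℝ)+1)) * ∫ t in (0:ℝ)..1, t ^ k * (X2 * (((k:ℝ)+1) * S^2)) := by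
          apply mul_le_mul_of_nonneg_left _ (by positivity)
          apply intervalIntegral.integral_mono_on zero_le_one hsumint hconst
          intro t ht
          exact mul_le_mul_of_nonneg_left (key2 t ht) (pow_nonneg ht.1 k)
      _ = (1/((k:ℝ)+1)) * ((1/((k:ℝ)+1)) * (X2 * (((k:ℝ)+1) * S^2))) := by
          rw [intervalIntegral.integral_mul_const, hpowint]
      _ = X2 * S^2 * (1/((k:ℝ)+1)) := by
          have hkne : ((k:ℝ)+1) ≠ 0 := by positivity
          field_simp
  -- final estimate
  have hkpos : (0:ℝ) < k := by exact_mod_cast Nat.pos_of_ne_zero (by omega)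
  have hfrac : (1:ℝ)/Real.sqrt ((k:ℝ)+1)
      ≤ Real.sqrt (((k:ℝ)+1) * (m.choose k : ℝ)) / k := by
    have hs1 : (0:ℝ) < Real.sqrt ((k:ℝ)+1) := Real.sqrt_pos.mpr (by positivity)
    rw [div_le_div_iff₀ hs1 hkpos, one_mul, ← Real.sqrt_mul (by positivity)]
    have hC1 : (1:ℝ) ≤ (m.choose k : ℝ) := by
      exact_mod_cast Nat.choose_pos hkm
    rw [Real.le_sqrt hknn (by positivity)]
    nlinarith
  have hLHS : eucNormK m k (fun w => ∫ t in (0 : ℝ)..1, t ^ k * β (t • x) (Fin.cons x w))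
      = Real.sqrt (∑ s : {s : Finset (Fin m) // s.card = k}, (a s)^2) := by
    rw [eucNormK]
    congr 1
  rw [hLHS]
  calc Real.sqrt (∑ s : {s : Finset (Fin m) // s.card = k}, (a s)^2)
      ≤ Real.sqrt (X2 * S^2 * (1/((k:ℝ)+1))) := Real.sqrt_le_sqrt key3
    _ = Real.sqrt X2 * S * (1/Real.sqrt ((k:ℝ)+1)) := by
        rw [Real.sqrt_mul (mul_nonneg hX2nn (sq_nonneg S)), Real.sqrt_mul hX2nn,
          Real.sqrt_sq hS0, one_div, Real.sqrt_inv, one_div]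
    _ ≤ Real.sqrt X2 * S * (Real.sqrt (((k:ℝ)+1) * (m.choose k : ℝ)) / k) := by
        exact mul_le_mul_of_nonneg_left hfrac (mul_nonneg (Real.sqrt_nonneg _) hS0)
    _ = (Real.sqrt X2 / k) * Real.sqrt (((k:ℝ)+1) * (m.choose k : ℝ)) * S := by ring

end RadialPoincareAux

/-- Quantitative Poincaré lemma: for a closed smooth `(k+1)`-form `β` (i.e. `k+1 ≥ 1`) on
a star-shaped open set `U ∋ 0`, the radial homotopy operator
`h(β)(x)(w) = ∫₀¹ tᵏ β(tx)(x, w) dt` gives a primitive, `d(h(β)) = β` on `U`, and for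
`k ≥ 1` (that is, for form degree `k + 1 > 1`) one has the estimate
`‖h(β)(x)‖₂ ≤ (‖x‖/k) √((k+1)⬝(m choose k)) ⬝ max_{0 ≤ t ≤ 1} ‖β(tx)‖₂`. -/
theorem radial_primitive_and_estimate {m k : ℕ}
    (U : Set (Fin m → ℝ)) (hUopen : IsOpen U) (hU0 : (0 : Fin m → ℝ) ∈ U)
    (hstar : ∀ x ∈ U, ∀ t ∈ Set.Icc (0 : ℝ) 1, t • x ∈ U)
    (β : (Fin m → ℝ) → ((Fin m → ℝ) [⋀^Fin (k + 1)]→ₗ[ℝ] ℝ))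
    (hsmooth : ∀ v : Fin (k + 1) → (Fin m → ℝ), ContDiffOn ℝ (⊤ : ℕ∞) (fun x => β x v) U)
    (hclosed : ∀ x ∈ U, ∀ v : Fin (k + 2) → (Fin m → ℝ),
      extDerivAt (fun y w => β y w) x v = 0) :
    (∀ x ∈ U, ∀ v : Fin (k + 1) → (Fin m → ℝ),
      extDerivAt (fun y w => ∫ t in (0 : ℝ)..1, t ^ k * β (t • y) (Fin.cons y w)) x v
        = β x v) ∧
    (1 ≤ k → ∀ x ∈ U,
      eucNormK m k (fun w => ∫ t in (0 : ℝ)..1, t ^ k * β (t • x) (Fin.cons x w)) ≤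
        (Real.sqrt (∑ i, x i ^ 2) / k) * Real.sqrt ((k + 1) * m.choose k) *
          ⨆ t : Set.Icc (0 : ℝ) 1, eucNormK m (k + 1) (fun w => β ((t : ℝ) • x) w)) := by
  constructor
  · intro x hx v
    exact RadialPoincareAux.part1 hUopen hstar β hsmooth hclosed hx v
  · intro hk x hx
    exact RadialPoincareAux.part2 hUopen hstar β hsmooth hk hx
end

section
/- Let β be a k-form on a star-shaped open set U ⊆ ℝ^m (k ≥ 1) all of whose coefficient functions in the standard basis are constant along rays through the origin (i.e. f_σ(tx) = f_σ(x) for all t ∈ (0,1]). Then the primitive h_k(β) = (ι_X ∘ α_k)(β) satisfies ‖h_k(β)(x)‖₂ ≤ (‖x‖/√k) · ‖β(x)‖₂ for every x ∈ U. -/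
/-!
For a ray-constant form the radial integral is `∫₀¹ tᵏ dt · β(x)(x, ·) = β(x)(x, ·)/(k+1)`.
Expanding `x` in the standard basis and applying Cauchy–Schwarz to each coefficient gives
`‖β(x)(x, ·)‖² ≤ ‖x‖² ∑_{σ, j} β(x)(e_j, e_σ)²`, where `σ` runs over `k`-sets. The terms with
`j ∈ σ` vanish, and every `(k+1)`-set `S` arises as `{j} ∪ σ` in exactly `k + 1` ways, with
`β(x)(e_j, e_σ) = ±β(x)(e_S)`; hence `‖β(x)(x, ·)‖² ≤ (k+1) ‖x‖² ‖β(x)‖²`.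
-/

open Finset Function

theorem exists_perm_comp_eq_of_range_eq {α β : Type*} {f g : β → α}
    (hf : Injective f) (hg : Injective g) (h : Set.range f = Set.range g) :
    ∃ σ : Equiv.Perm β, g ∘ σ = f :=
  ⟨(Equiv.ofInjective f hf).trans ((Equiv.setCongr h).trans (Equiv.ofInjective g hg).symm),
    funext fun i => by simp [Equiv.apply_ofInjective_symm]⟩

variable (ι : Type*) [DecidableEq ι] in
def sigmaNotMemEquivSigmaMem (k : ℕ) :
    (Σ s : {t : Finset ι // t.card = k}, {j // j ∉ s.1}) ≃
      (Σ S : {t : Finset ι // t.card = k + 1}, {j // j ∈ S.1}) where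
  toFun p := ⟨⟨insert p.2.1 p.1.1, by rw [card_insert_of_notMem p.2.2, p.1.2]⟩,
    ⟨p.2.1, mem_insert_self _ _⟩⟩
  invFun p := ⟨⟨p.1.1.erase p.2.1, by rw [card_erase_of_mem p.2.2, p.1.2]; rfl⟩,
    ⟨p.2.1, notMem_erase _ _⟩⟩
  left_inv p := Sigma.subtype_ext (Subtype.ext (erase_insert p.2.2)) rfl
  right_inv p := Sigma.subtype_ext (Subtype.ext (insert_erase p.2.2)) rfl

namespace AlternatingMap

section CommRing

variable {R M N : Type*} [CommRing R] [AddCommGroup M] [Module R M] [AddCommGroup N] [Module R N]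

theorem apply_cons_eq_sum_repr {ι : Type*} [Fintype ι] {k : ℕ}
    (ω : M [⋀^Fin (k + 1)]→ₗ[R] N) (b : Module.Basis ι R M) (x : M) (w : Fin k → M) :
    ω (Fin.cons x w) = ∑ j, b.repr x j • ω (Fin.cons (b j) w) := by
  have hupdate (y : M) : (Fin.cons y w : Fin (k + 1) → M) = update (Fin.cons (0 : M) w) 0 y :=
    (Fin.update_cons_zero ..).symm
  conv_lhs => rw [← b.sum_repr x, hupdate, ω.map_update_sum]
  exact sum_congr rfl fun j _ => by rw [ω.map_update_smul, ← hupdate]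

variable {ι : Type*} [LinearOrder ι]

theorem apply_cons_comp_orderEmbOfFin_of_mem {k : ℕ} (ω : M [⋀^Fin (k + 1)]→ₗ[R] N)
    (v : ι → M) {s : Finset ι} (hs : s.card = k) {j : ι} (hj : j ∈ s) :
    ω (Fin.cons (v j) (v ∘ s.orderEmbOfFin hs)) = 0 := by
  obtain ⟨i, rfl⟩ : j ∈ Set.range (s.orderEmbOfFin hs) := by simpa using hj
  exact ω.map_eq_zero_of_eq _ (i := 0) (j := i.succ) (by simp) (Fin.succ_ne_zero i).symm

theorem sq_apply_cons_comp_orderEmbOfFin_of_notMem {k : ℕ} (ω : M [⋀^Fin (k + 1)]→ₗ[R] R)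
    (v : ι → M) {s : Finset ι} (hs : s.card = k) {j : ι} (hj : j ∉ s) :
    ω (Fin.cons (v j) (v ∘ s.orderEmbOfFin hs)) ^ 2 =
      ω (v ∘ (insert j s).orderEmbOfFin (by rw [card_insert_of_notMem hj, hs])) ^ 2 := by
  have hS : (insert j s).card = k + 1 := by rw [card_insert_of_notMem hj, hs]
  obtain ⟨σ, hσ⟩ := exists_perm_comp_eq_of_range_eq
    (Fin.cons_injective_iff.2 ⟨by simpa using hj, (s.orderEmbOfFin hs).injective⟩)
    ((insert j s).orderEmbOfFin hS).injective (by simp)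
  rw [← Fin.comp_cons, ← hσ, ← comp_assoc, ω.map_perm, Units.smul_def, smul_pow,
    ← Units.val_pow_eq_pow_val, Int.units_sq, Units.val_one, one_smul]

theorem sum_sum_sq_apply_cons [Fintype ι] {k : ℕ} (ω : M [⋀^Fin (k + 1)]→ₗ[R] R) (v : ι → M) :
    ∑ s : {t : Finset ι // t.card = k}, ∑ j, ω (Fin.cons (v j) (v ∘ s.1.orderEmbOfFin s.2)) ^ 2 =
      (k + 1) * ∑ S : {t : Finset ι // t.card = k + 1}, ω (v ∘ S.1.orderEmbOfFin S.2) ^ 2 := by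
  calc _ = ∑ s : {t : Finset ι // t.card = k}, ∑ j : {j // j ∉ s.1},
        ω (Fin.cons (v j) (v ∘ s.1.orderEmbOfFin s.2)) ^ 2 := by
        refine sum_congr rfl fun s _ => ?_
        refine (sum_subset (subset_univ s.1ᶜ) fun j _ hj => ?_).symm.trans
          (sum_subtype _ (by simp) _)
        rw [ω.apply_cons_comp_orderEmbOfFin_of_mem v s.2 (by simpa using hj), sq, zero_mul]
    _ = ∑ S : {t : Finset ι // t.card = k + 1}, ∑ _j : {j // j ∈ S.1},
        ω (v ∘ S.1.orderEmbOfFin S.2) ^ 2 := by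
      simpa only [Fintype.sum_sigma] using Fintype.sum_equiv (sigmaNotMemEquivSigmaMem ι k) _
        (fun S => ω (v ∘ S.1.1.orderEmbOfFin S.1.2) ^ 2) fun p =>
          ω.sq_apply_cons_comp_orderEmbOfFin_of_notMem v p.1.2 p.2.2
    _ = _ := by
      rw [mul_sum]
      refine sum_congr rfl fun S _ => ?_
      simp [S.2]

end CommRing

theorem sum_sq_apply_cons_le {R M : Type*} [CommRing R] [LinearOrder R] [IsStrictOrderedRing R]
    [AddCommGroup M] [Module R M] {ι : Type*} [LinearOrder ι] [Fintype ι] {k : ℕ}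
    (ω : M [⋀^Fin (k + 1)]→ₗ[R] R) (b : Module.Basis ι R M) (x : M) :
    ∑ s : {t : Finset ι // t.card = k}, ω (Fin.cons x (b ∘ s.1.orderEmbOfFin s.2)) ^ 2 ≤
      (∑ j, b.repr x j ^ 2) *
        ((k + 1) * ∑ S : {t : Finset ι // t.card = k + 1}, ω (b ∘ S.1.orderEmbOfFin S.2) ^ 2) := by
  rw [← ω.sum_sum_sq_apply_cons, mul_sum]
  refine sum_le_sum fun s _ => ?_
  rw [ω.apply_cons_eq_sum_repr b]
  simpa only [smul_eq_mul] using sum_mul_sq_le_sq_mul_sq _ _ _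

end AlternatingMap

theorem eucNormK_eq (m k : ℕ) (ω : (Fin k → (Fin m → ℝ)) → ℝ) :
    eucNormK m k ω = √(∑ s : {t : Finset (Fin m) // t.card = k},
      ω (Pi.basisFun ℝ (Fin m) ∘ s.1.orderEmbOfFin s.2) ^ 2) := by
  simp only [eucNormK, Pi.basisFun_apply, comp_def]

theorem eucNormK_const_mul (m k : ℕ) (c : ℝ) (ω : (Fin k → (Fin m → ℝ)) → ℝ) :
    eucNormK m k (fun w => c * ω w) = |c| * eucNormK m k ω := by
  simp only [eucNormK, mul_pow, ← mul_sum, Real.sqrt_mul (sq_nonneg c), Real.sqrt_sq_eq_abs]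

theorem eucNormK_apply_cons_le {m k : ℕ} (ω : (Fin m → ℝ) [⋀^Fin (k + 1)]→ₗ[ℝ] ℝ)
    (x : Fin m → ℝ) :
    eucNormK m k (fun w => ω (Fin.cons x w)) ≤
      √(∑ i, x i ^ 2) * √(k + 1) * eucNormK m (k + 1) ω := by
  rw [eucNormK_eq, eucNormK_eq, ← Real.sqrt_mul (by positivity), ← Real.sqrt_mul (by positivity),
    mul_assoc]
  exact Real.sqrt_le_sqrt (by simpa using ω.sum_sq_apply_cons_le (Pi.basisFun ℝ (Fin m)) x)

theorem intervalIntegral_pow_mul_eq_of_eqOn_Ioc (k : ℕ) {f : ℝ → ℝ} {c : ℝ}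
    (hf : Set.EqOn f (fun _ => c) (Set.Ioc 0 1)) :
    ∫ t in (0 : ℝ)..1, t ^ k * f t = (k + 1 : ℝ)⁻¹ * c := by
  rw [intervalIntegral.integral_congr_ae (g := fun t => t ^ k * c)
    (.of_forall fun t ht => by rw [hf (by simpa using ht)]),
    intervalIntegral.integral_mul_const, integral_pow]
  simp

theorem radial_primitive_estimate_ray_constant_general {m k : ℕ}
    (U : Set (Fin m → ℝ))
    (β : (Fin m → ℝ) → ((Fin m → ℝ) [⋀^Fin (k + 1)]→ₗ[ℝ] ℝ))
    (hray : ∀ x ∈ U, ∀ t ∈ Set.Ioc (0 : ℝ) 1, β (t • x) = β x) :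
    ∀ x ∈ U,
      eucNormK m k (fun w => ∫ t in (0 : ℝ)..1, t ^ k * β (t • x) (Fin.cons x w)) ≤
        (Real.sqrt (∑ i, x i ^ 2) / Real.sqrt (k + 1)) *
          eucNormK m (k + 1) (fun w => β x w) := by
  intro x hx
  have hprimitive : (fun w => ∫ t in (0 : ℝ)..1, t ^ k * β (t • x) (Fin.cons x w)) =
      fun w => (k + 1 : ℝ)⁻¹ * β x (Fin.cons x w) :=
    funext fun w => intervalIntegral_pow_mul_eq_of_eqOn_Ioc k fun t ht => by
      simp only [hray x hx t ht]
  have hk : (0 : ℝ) < k + 1 := by positivity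
  rw [hprimitive, eucNormK_const_mul, abs_of_pos (inv_pos.2 hk)]
  calc (k + 1 : ℝ)⁻¹ * eucNormK m k (fun w => β x (Fin.cons x w))
      ≤ (k + 1 : ℝ)⁻¹ * (√(∑ i, x i ^ 2) * √(k + 1) * eucNormK m (k + 1) (β x)) := by
        gcongr; exact eucNormK_apply_cons_le (β x) x
    _ = _ := by
      field_simp
      rw [Real.sq_sqrt hk.le]
      ring

/-- If all coefficients of a `(k+1)`-form `β` on a star-shaped open set `U` are constant
along rays through the origin, then the radial primitive
`h(β)(x)(w) = ∫₀¹ tᵏ β(tx)(x, w) dt` satisfies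
`‖h(β)(x)‖₂ ≤ (‖x‖/√(k+1)) ⬝ ‖β(x)‖₂` for every `x ∈ U`. -/
theorem radial_primitive_estimate_ray_constant {m k : ℕ}
    (U : Set (Fin m → ℝ)) (hUopen : IsOpen U) (hU0 : (0 : Fin m → ℝ) ∈ U)
    (hstar : ∀ x ∈ U, ∀ t ∈ Set.Icc (0 : ℝ) 1, t • x ∈ U)
    (β : (Fin m → ℝ) → ((Fin m → ℝ) [⋀^Fin (k + 1)]→ₗ[ℝ] ℝ))
    (hray : ∀ x ∈ U, ∀ t ∈ Set.Ioc (0 : ℝ) 1, β (t • x) = β x) :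
    ∀ x ∈ U,
      eucNormK m k (fun w => ∫ t in (0 : ℝ)..1, t ^ k * β (t • x) (Fin.cons x w)) ≤
        (Real.sqrt (∑ i, x i ^ 2) / Real.sqrt (k + 1)) *
          eucNormK m (k + 1) (fun w => β x w) :=
  radial_primitive_estimate_ray_constant_general U β hray
end

section
/- For n ≥ 2 and any nonzero K, the linear map Φ = Ψ × id on ℝ^{2n} = ℝ⁴ × ℝ^{2n−4}, where Ψ(x₁,y₁,x₂,y₂) = (x₁, y₁ + ε x₂, −K⁻¹ x₂, −K y₂), satisfies Φ*ω₀ − ω₀ = ε dx₁ ∧ dx₂, (Φ⁻¹)*ω₀ − ω₀ = Kε dx₁ ∧ dx₂, and (Φᵀ)*ω₀ − ω₀ = −Kε dy₁ ∧ dy₂. In particular, the inverse of an ε-symplectic linear map need not be ε'-symplectic for any ε' depending only on ε. -/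
/-!
All three maps are the identity outside the coordinates `x₁, y₁, x₂, y₂`, so every defect
(`Φ ∘ Φinv − id`, the transpose pairing, the pulled-back symplectic forms) localizes to the two
blocks `j = 1, 2`, where it is a finite polynomial identity in `ε`, `K` and `K⁻¹`.
-/

/-- The standard symplectic form `ω₀` on `ℝ^{2n}`, coordinates indexed by `Fin n × Fin 2`
(`(j,0)` is `x_{j+1}`, `(j,1)` is `y_{j+1}`). -/
def omega0 (n : ℕ) (u v : Fin n × Fin 2 → ℝ) : ℝ :=
  ∑ j : Fin n, (u (j, 0) * v (j, 1) - u (j, 1) * v (j, 0))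

section FixesOff

variable {ι R : Type*} {a b : ι}

def FixesOff (a b : ι) (Φ : (ι × Fin 2 → R) → (ι × Fin 2 → R)) : Prop :=
  ∀ v j, j ≠ a → j ≠ b → ∀ i, Φ v (j, i) = v (j, i)

theorem fixesOff_of_eq_ite [DecidableEq ι] (hab : a ≠ b)
    {Φ : (ι × Fin 2 → R) → (ι × Fin 2 → R)} {f₁ f₂ f₃ f₄ : (ι × Fin 2 → R) → R}
    (h : ∀ v p, Φ v p =
      if p = (a, 0) then f₁ v else if p = (a, 1) then f₂ v
      else if p = (b, 0) then f₃ v else if p = (b, 1) then f₄ v else v p) :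
    (∀ v, Φ v (a, 0) = f₁ v) ∧ (∀ v, Φ v (a, 1) = f₂ v) ∧
      (∀ v, Φ v (b, 0) = f₃ v) ∧ (∀ v, Φ v (b, 1) = f₄ v) ∧ FixesOff a b Φ :=
  ⟨fun v => by simp [h], fun v => by simp [h], fun v => by simp [h, hab.symm],
    fun v => by simp [h, hab.symm], fun v j hja hjb i => by simp [h, hja, hjb]⟩

theorem FixesOff.comp_apply_eq_self {Φ Ψ : (ι × Fin 2 → R) → (ι × Fin 2 → R)}
    (hΦ : FixesOff a b Φ) (hΨ : FixesOff a b Ψ) {v : ι × Fin 2 → R}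
    (ha : ∀ i, Φ (Ψ v) (a, i) = v (a, i)) (hb : ∀ i, Φ (Ψ v) (b, i) = v (b, i)) :
    Φ (Ψ v) = v := by
  funext ⟨j, i⟩
  by_cases hja : j = a
  · exact hja ▸ ha i
  by_cases hjb : j = b
  · exact hjb ▸ hb i
  rw [hΦ _ j hja hjb, hΨ _ j hja hjb]

theorem Fintype.sum_sub_sum_eq_of_eq_off_pair {M : Type*} [Fintype ι] [AddCommGroup M]
    (hab : a ≠ b) {f g : ι → M} (h : ∀ j, j ≠ a → j ≠ b → f j = g j) :
    ∑ j, f j - ∑ j, g j = (f a - g a) + (f b - g b) := by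
  rw [← Finset.sum_sub_distrib]
  refine Finset.sum_eq_add_of_mem a b (Finset.mem_univ _) (Finset.mem_univ _) hab ?_
  rintro j - ⟨hja, hjb⟩
  rw [h j hja hjb, sub_self]

theorem FixesOff.sum_mul_sub_sum_mul [Fintype ι] [CommRing R] (hab : a ≠ b)
    {Φ Ψ : (ι × Fin 2 → R) → (ι × Fin 2 → R)} (hΦ : FixesOff a b Φ) (hΨ : FixesOff a b Ψ)
    (u v : ι × Fin 2 → R) :
    ∑ p, Ψ u p * v p - ∑ p, u p * Φ v p =
      ∑ i, (Ψ u (a, i) * v (a, i) - u (a, i) * Φ v (a, i)) +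
        ∑ i, (Ψ u (b, i) * v (b, i) - u (b, i) * Φ v (b, i)) := by
  rw [Fintype.sum_prod_type, Fintype.sum_prod_type,
    Fintype.sum_sub_sum_eq_of_eq_off_pair hab fun j hja hjb =>
      Finset.sum_congr rfl fun i _ => by rw [hΦ v j hja hjb, hΨ u j hja hjb]]
  simp only [Finset.sum_sub_distrib]

end FixesOff

theorem FixesOff.omega0_sub_omega0 {n : ℕ} {a b : Fin n} (hab : a ≠ b)
    {Φ : (Fin n × Fin 2 → ℝ) → (Fin n × Fin 2 → ℝ)} (hΦ : FixesOff a b Φ)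
    (u v : Fin n × Fin 2 → ℝ) :
    omega0 n (Φ u) (Φ v) - omega0 n u v =
      (Φ u (a, 0) * Φ v (a, 1) - Φ u (a, 1) * Φ v (a, 0)
          - (u (a, 0) * v (a, 1) - u (a, 1) * v (a, 0))) +
        (Φ u (b, 0) * Φ v (b, 1) - Φ u (b, 1) * Φ v (b, 0)
          - (u (b, 0) * v (b, 1) - u (b, 1) * v (b, 0))) :=
  Fintype.sum_sub_sum_eq_of_eq_off_pair hab fun j hja hjb => by
    simp only [hΦ u j hja hjb, hΦ v j hja hjb]

/-- For `n ≥ 2`, `K ≠ 0` and the map `Φ = Ψ × id` with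
`Ψ(x₁,y₁,x₂,y₂) = (x₁, y₁ + ε x₂, −K⁻¹ x₂, −K y₂)`: `Φinv` is the inverse of `Φ`, `Φt`
is its transpose, and `Φ*ω₀ − ω₀ = ε dx₁∧dx₂`, `(Φ⁻¹)*ω₀ − ω₀ = Kε dx₁∧dx₂`,
`(Φᵀ)*ω₀ − ω₀ = −Kε dy₁∧dy₂`. -/
theorem inverse_transpose_eps_symplectic_example (n : ℕ) (hn : 2 ≤ n) (K ε : ℝ)
    (hK : K ≠ 0)
    (Φ Φinv Φt : (Fin n × Fin 2 → ℝ) → (Fin n × Fin 2 → ℝ))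
    (hΦ : ∀ v p, Φ v p =
      if p = ((⟨0, by omega⟩ : Fin n), 0) then v ((⟨0, by omega⟩ : Fin n), 0)
      else if p = ((⟨0, by omega⟩ : Fin n), 1) then
        v ((⟨0, by omega⟩ : Fin n), 1) + ε * v ((⟨1, by omega⟩ : Fin n), 0)
      else if p = ((⟨1, by omega⟩ : Fin n), 0) then -K⁻¹ * v ((⟨1, by omega⟩ : Fin n), 0)
      else if p = ((⟨1, by omega⟩ : Fin n), 1) then -K * v ((⟨1, by omega⟩ : Fin n), 1)
      else v p)
    (hΦinv : ∀ v p, Φinv v p =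
      if p = ((⟨0, by omega⟩ : Fin n), 0) then v ((⟨0, by omega⟩ : Fin n), 0)
      else if p = ((⟨0, by omega⟩ : Fin n), 1) then
        v ((⟨0, by omega⟩ : Fin n), 1) + ε * K * v ((⟨1, by omega⟩ : Fin n), 0)
      else if p = ((⟨1, by omega⟩ : Fin n), 0) then -K * v ((⟨1, by omega⟩ : Fin n), 0)
      else if p = ((⟨1, by omega⟩ : Fin n), 1) then -K⁻¹ * v ((⟨1, by omega⟩ : Fin n), 1)
      else v p)
    (hΦt : ∀ u p, Φt u p =
      if p = ((⟨0, by omega⟩ : Fin n), 0) then u ((⟨0, by omega⟩ : Fin n), 0)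
      else if p = ((⟨0, by omega⟩ : Fin n), 1) then u ((⟨0, by omega⟩ : Fin n), 1)
      else if p = ((⟨1, by omega⟩ : Fin n), 0) then
        ε * u ((⟨0, by omega⟩ : Fin n), 1) - K⁻¹ * u ((⟨1, by omega⟩ : Fin n), 0)
      else if p = ((⟨1, by omega⟩ : Fin n), 1) then -K * u ((⟨1, by omega⟩ : Fin n), 1)
      else u p) :
    (∀ v, Φ (Φinv v) = v ∧ Φinv (Φ v) = v) ∧
    (∀ u v, ∑ p : Fin n × Fin 2, Φt u p * v p = ∑ p : Fin n × Fin 2, u p * Φ v p) ∧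
    (∀ u v, omega0 n (Φ u) (Φ v) - omega0 n u v =
      ε * (u ((⟨0, by omega⟩ : Fin n), 0) * v ((⟨1, by omega⟩ : Fin n), 0)
        - u ((⟨1, by omega⟩ : Fin n), 0) * v ((⟨0, by omega⟩ : Fin n), 0))) ∧
    (∀ u v, omega0 n (Φinv u) (Φinv v) - omega0 n u v =
      K * ε * (u ((⟨0, by omega⟩ : Fin n), 0) * v ((⟨1, by omega⟩ : Fin n), 0)
        - u ((⟨1, by omega⟩ : Fin n), 0) * v ((⟨0, by omega⟩ : Fin n), 0))) ∧
    (∀ u v, omega0 n (Φt u) (Φt v) - omega0 n u v =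
      -(K * ε) * (u ((⟨0, by omega⟩ : Fin n), 1) * v ((⟨1, by omega⟩ : Fin n), 1)
        - u ((⟨1, by omega⟩ : Fin n), 1) * v ((⟨0, by omega⟩ : Fin n), 1))) := by
  have hab : (⟨0, by omega⟩ : Fin n) ≠ ⟨1, by omega⟩ := Fin.ne_of_val_ne zero_ne_one
  obtain ⟨Φ₁, Φ₂, Φ₃, Φ₄, hΦ₀⟩ := fixesOff_of_eq_ite hab hΦ
  obtain ⟨Φinv₁, Φinv₂, Φinv₃, Φinv₄, hΦinv₀⟩ := fixesOff_of_eq_ite hab hΦinv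
  obtain ⟨Φt₁, Φt₂, Φt₃, Φt₄, hΦt₀⟩ := fixesOff_of_eq_ite hab hΦt
  refine ⟨fun v => ⟨?_, ?_⟩, fun u v => ?_, fun u v => ?_, fun u v => ?_, fun u v => ?_⟩
  · refine hΦ₀.comp_apply_eq_self hΦinv₀ (Fin.forall_fin_two.2 ⟨?_, ?_⟩)
      (Fin.forall_fin_two.2 ⟨?_, ?_⟩) <;> grind
  · refine hΦinv₀.comp_apply_eq_self hΦ₀ (Fin.forall_fin_two.2 ⟨?_, ?_⟩)
      (Fin.forall_fin_two.2 ⟨?_, ?_⟩) <;> grind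
  · rw [← sub_eq_zero, hΦ₀.sum_mul_sub_sum_mul hab hΦt₀]
    simp only [Fin.sum_univ_two, Φ₁, Φ₂, Φ₃, Φ₄, Φt₁, Φt₂, Φt₃, Φt₄]
    ring
  · rw [hΦ₀.omega0_sub_omega0 hab]
    simp only [Φ₁, Φ₂, Φ₃, Φ₄]
    field_simp
    ring
  · rw [hΦinv₀.omega0_sub_omega0 hab]
    simp only [Φinv₁, Φinv₂, Φinv₃, Φinv₄]
    field_simp
    ring
  · rw [hΦt₀.omega0_sub_omega0 hab]
    simp only [Φt₁, Φt₂, Φt₃, Φt₄]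
    field_simp
    ring
end
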